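/- arXiv:1210.3161 — 12 statements merged into one kernel-verified Lean document; each statement's English description precedes it below -/
import Mathlib

section
/- Let α > 1 and let 0 < t_s < τ. Then the quantity χ_s(τ) := ∫_{t_s}^{τ} (τ^α / t^α) · (τ^{2α} − t^{2α})^{−1/2} dt is strictly less than t_s^{1−α}/(α−1). -/
open Real MeasureTheory intervalIntegral

/-!
The function `F(t) = -t^{1-α} √(τ^{2α} - t^{2α}) / ((α-1) τ^α)` has derivative the integrand plus
the nonnegative term `t^α (τ^{2α} - t^{2α})^{-1/2} / ((α-1) τ^α)`. Hence
`χ_s(τ) ≤ F(τ) - F(t_s) = χ_horiz(t_s) · √(1 - (t_s/τ)^{2α}) < χ_horiz(t_s)`.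
The integrand blows up at `t = τ`, but a nonnegative function dominated by the derivative of a
function continuous on the closed interval is integrable there.
-/

open Set

theorem intervalIntegral_le_sub_of_hasDerivAt_of_le {f F F' : ℝ → ℝ} {a b : ℝ} (hab : a ≤ b)
    (hF : ContinuousOn F (Icc a b)) (hderiv : ∀ x ∈ Ioo a b, HasDerivAt F (F' x) x)
    (hf : AEStronglyMeasurable f (volume.restrict (Ioo a b)))
    (hf₀ : ∀ x ∈ Ioo a b, 0 ≤ f x) (hfF : ∀ x ∈ Ioo a b, f x ≤ F' x) :
    ∫ x in a..b, f x ≤ F b - F a := by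
  have hF'_int : IntegrableOn F' (Ioo a b) :=
    (integrableOn_deriv_of_nonneg hF hderiv fun x hx ↦ (hf₀ x hx).trans (hfF x hx)).mono_set
      Ioo_subset_Ioc_self
  have hf_int : IntegrableOn f (Ioo a b) :=
    hF'_int.mono' hf <| ae_restrict_of_forall_mem measurableSet_Ioo fun x hx ↦ by
      rw [norm_of_nonneg (hf₀ x hx)]
      exact hfF x hx
  exact integral_le_sub_of_hasDeriv_right_of_le hab hF (fun x hx ↦ (hderiv x hx).hasDerivWithinAt)
    ((integrableOn_Icc_iff_integrableOn_Ioo (f := f)).mpr hf_int) hfF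

noncomputable def chiIntegrand (α τ t : ℝ) : ℝ :=
  (τ ^ α / t ^ α) * (τ ^ (2 * α) - t ^ (2 * α)) ^ (-(1 : ℝ) / 2)

noncomputable def chiPrimitive (α τ t : ℝ) : ℝ :=
  -(t ^ (1 - α) * (τ ^ (2 * α) - t ^ (2 * α)) ^ (1 / 2 : ℝ)) / ((α - 1) * τ ^ α)

variable {α τ t : ℝ}

theorem chiIntegrand_nonneg (hα : 0 ≤ α) (ht : 0 ≤ t) (htτ : t ≤ τ) : 0 ≤ chiIntegrand α τ t := by
  have : 0 ≤ τ := ht.trans htτ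
  have : 0 ≤ τ ^ (2 * α) - t ^ (2 * α) := sub_nonneg.mpr (rpow_le_rpow ht htτ (by positivity))
  unfold chiIntegrand
  positivity

theorem hasDerivAt_chiPrimitive (hα : 1 < α) (ht : 0 < t) (htτ : t < τ) :
    HasDerivAt (chiPrimitive α τ) (chiIntegrand α τ t +
      t ^ α * (τ ^ (2 * α) - t ^ (2 * α)) ^ (-(1 : ℝ) / 2) / ((α - 1) * τ ^ α)) t := by
  have hτ : 0 < τ := ht.trans htτ
  have hh : 0 < τ ^ (2 * α) - t ^ (2 * α) := sub_pos.mpr (rpow_lt_rpow ht.le htτ (by positivity))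
  have hderiv := (((hasDerivAt_rpow_const (p := 1 - α) (Or.inl ht.ne')).mul
    (((hasDerivAt_rpow_const (p := 2 * α) (Or.inl ht.ne')).const_sub (τ ^ (2 * α))).rpow_const
      (p := 1 / 2) (Or.inl hh.ne'))).neg).div_const ((α - 1) * τ ^ α)
  refine (hderiv : HasDerivAt (chiPrimitive α τ) _ t).congr_deriv ?_
  have h_half : (1 / 2 : ℝ) - 1 = -(1 : ℝ) / 2 := by norm_num
  have h_sqrt : (τ ^ (2 * α) - t ^ (2 * α)) ^ (1 / 2 : ℝ) =
      (τ ^ (2 * α) - t ^ (2 * α)) ^ (-(1 : ℝ) / 2) * (τ ^ (2 * α) - t ^ (2 * α)) := by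
    rw [← rpow_add_one hh.ne']; norm_num
  have h_sq (x : ℝ) (hx : 0 < x) : x ^ (2 * α) = (x ^ α) ^ 2 := by
    rw [mul_comm, rpow_mul hx.le, rpow_two]
  have h_neg : t ^ (1 - α - 1) = (t ^ α)⁻¹ := by
    rw [show 1 - α - 1 = -α by ring, rpow_neg ht.le]
  have h_one_sub : t ^ (1 - α) = t / t ^ α := by rw [rpow_sub ht, rpow_one]
  have h_two_sub : t ^ (2 * α - 1) = (t ^ α) ^ 2 / t := by rw [rpow_sub_one ht.ne', h_sq t ht]
  rw [chiIntegrand, h_half, h_sqrt, h_neg, h_one_sub, h_two_sub, h_sq t ht, h_sq τ hτ]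
  generalize ((τ ^ α) ^ 2 - (t ^ α) ^ 2) ^ (-(1 : ℝ) / 2) = r
  have : t ^ α ≠ 0 := by positivity
  have : τ ^ α ≠ 0 := by positivity
  have : α - 1 ≠ 0 := by linarith
  field_simp
  ring

theorem continuousOn_chiPrimitive {ts : ℝ} (hts : 0 < ts) :
    ContinuousOn (chiPrimitive α τ) (Icc ts τ) := by
  have hne : ∀ t ∈ Icc ts τ, t ≠ 0 := fun t ht ↦ (hts.trans_le ht.1).ne'
  refine ContinuousOn.div_const (ContinuousOn.neg (ContinuousOn.mul ?_ ?_)) _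
  · exact continuousOn_id.rpow_const fun t ht ↦ Or.inl (hne t ht)
  · exact ContinuousOn.rpow_const
      (continuousOn_const.sub (continuousOn_id.rpow_const fun t ht ↦ Or.inl (hne t ht)))
      fun _ _ ↦ Or.inr (by norm_num)

theorem chiPrimitive_self : chiPrimitive α τ τ = 0 := by
  simp [chiPrimitive]

theorem neg_chiPrimitive_lt (hα : 1 < α) (ht : 0 < t) (htτ : t < τ) :
    -chiPrimitive α τ t < t ^ (1 - α) / (α - 1) := by
  have hτ : 0 < τ := ht.trans htτ
  have hroot : (τ ^ (2 * α) - t ^ (2 * α)) ^ (1 / 2 : ℝ) < τ ^ α := calc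
    _ < (τ ^ (2 * α)) ^ (1 / 2 : ℝ) := by
      gcongr
      · exact sub_nonneg.mpr (rpow_le_rpow ht.le htτ.le (by positivity))
      · exact sub_lt_self _ (by positivity)
    _ = τ ^ α := by rw [← rpow_mul hτ.le]; ring_nf
  have hα₁ : 0 < α - 1 := by linarith
  rw [chiPrimitive, neg_div, neg_neg, mul_comm (α - 1), ← div_div,
    div_lt_div_iff_of_pos_right hα₁, div_lt_iff₀ (by positivity)]
  gcongr

/-- For `α > 1` and `0 < t_s < τ`, the χ-coordinate
`χ_s(τ) = ∫_{t_s}^{τ} (τ^α / t^α) (τ^{2α} - t^{2α})^{-1/2} dt` is strictly less than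
the event-horizon coordinate `t_s^{1-α}/(α-1)`. -/
theorem chi_s_lt_chi_horiz (α ts τ : ℝ) (hα : 1 < α) (hts : 0 < ts) (hτ : ts < τ) :
    (∫ t in ts..τ, (τ ^ α / t ^ α) * (τ ^ (2 * α) - t ^ (2 * α)) ^ (-(1 : ℝ) / 2))
      < ts ^ (1 - α) / (α - 1) := by
  have : 0 < τ := hts.trans hτ
  have : 0 < α - 1 := by linarith
  have hmeas : Measurable (chiIntegrand α τ) := by unfold chiIntegrand; fun_prop
  calc ∫ t in ts..τ, chiIntegrand α τ t
      ≤ chiPrimitive α τ τ - chiPrimitive α τ ts := by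
        refine intervalIntegral_le_sub_of_hasDerivAt_of_le hτ.le (continuousOn_chiPrimitive hts)
          (fun t ht ↦ hasDerivAt_chiPrimitive hα (hts.trans ht.1) ht.2)
          hmeas.aestronglyMeasurable
          (fun t ht ↦ chiIntegrand_nonneg (by linarith) (hts.trans ht.1).le ht.2.le)
          (fun t ht ↦ le_add_of_nonneg_right ?_)
        have : 0 < t := hts.trans ht.1
        have : 0 < τ ^ (2 * α) - t ^ (2 * α) :=
          sub_pos.mpr (rpow_lt_rpow this.le ht.2 (by positivity))
        positivity
    _ = -chiPrimitive α τ ts := by rw [chiPrimitive_self, zero_sub]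
    _ < ts ^ (1 - α) / (α - 1) := neg_chiPrimitive_lt hα hts hτ
end

section
/- Let α > 1 and fix t_s > 0. Then the function τ ↦ χ_s(τ) := ∫_{t_s}^{τ} (τ^α / t^α) · (τ^{2α} − t^{2α})^{−1/2} dt is strictly increasing on (t_s, ∞); equivalently, its derivative with respect to τ is positive for every τ > t_s. -/
/-!
Substituting `t = τ u` gives `χ_s(τ) = τ ^ (1 - α) * ∫ u in x..1, kernel α u` with `x = t_s / τ`,
hence `χ_s'(τ) = τ ^ (-α) * (x * kernel α x - (α - 1) * ∫ u in x..1, kernel α u)`.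
Since `-boundaryTerm α` has derivative `(α - 1 + u ^ (2 * α)) * kernel α u ≥ (α - 1) * kernel α u`,
the integral term is at most `boundaryTerm α x - boundaryTerm α 1 = boundaryTerm α x`, which is
`< x * kernel α x` because `0 < 1 - x ^ (2 * α) < 1`. The same derivative makes the kernel
integrable at its singularity `u = 1`: up to a positive continuous weight it is the nonnegative
derivative of a continuous function.
-/

open Real MeasureTheory intervalIntegral Filter Set Topology

namespace ChiCoordinate

noncomputable def kernel (α u : ℝ) : ℝ := u ^ (-α) * (1 - u ^ (2 * α)) ^ (-(1 : ℝ) / 2)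

noncomputable def boundaryTerm (α u : ℝ) : ℝ := u ^ (1 - α) * (1 - u ^ (2 * α)) ^ ((1 : ℝ) / 2)

variable {α u x : ℝ}

lemma one_sub_rpow_nonneg {p : ℝ} (hp : 0 ≤ p) (hu0 : 0 ≤ u) (hu1 : u ≤ 1) : 0 ≤ 1 - u ^ p :=
  sub_nonneg.2 (rpow_le_one hu0 hu1 hp)

lemma one_sub_rpow_pos {p : ℝ} (hp : 0 < p) (hu0 : 0 ≤ u) (hu1 : u < 1) : 0 < 1 - u ^ p :=
  sub_pos.2 (rpow_lt_one hu0 hu1 hp)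

lemma kernel_nonneg (hα : 0 ≤ α) (hu0 : 0 ≤ u) (hu1 : u ≤ 1) : 0 ≤ kernel α u :=
  mul_nonneg (rpow_nonneg hu0 _) (rpow_nonneg (one_sub_rpow_nonneg (by positivity) hu0 hu1) _)

lemma continuousOn_kernel (hα : 0 < α) : ContinuousOn (kernel α) (Ioo 0 1) := by
  intro u hu
  have h1 : 0 < 1 - u ^ (2 * α) := one_sub_rpow_pos (by positivity) hu.1.le hu.2
  refine ContinuousAt.continuousWithinAt ?_
  exact (continuousAt_rpow_const _ _ (Or.inl hu.1.ne')).mul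
    ((continuousAt_const.sub (continuousAt_rpow_const _ _ (Or.inl hu.1.ne'))).rpow_const
      (Or.inl h1.ne'))

lemma continuousOn_boundaryTerm (hx : 0 < x) : ContinuousOn (boundaryTerm α) (Icc x 1) := by
  intro u hu
  have hu0 : u ≠ 0 := (hx.trans_le hu.1).ne'
  refine ContinuousAt.continuousWithinAt ?_
  exact (continuousAt_rpow_const _ _ (Or.inl hu0)).mul
    ((continuousAt_const.sub (continuousAt_rpow_const _ _ (Or.inl hu0))).rpow_const
      (Or.inr (by norm_num)))

lemma hasDerivAt_boundaryTerm (hα : 0 < α) (hu0 : 0 < u) (hu1 : u < 1) :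
    HasDerivAt (boundaryTerm α) (-((α - 1 + u ^ (2 * α)) * kernel α u)) u := by
  have hz : 0 < 1 - u ^ (2 * α) := one_sub_rpow_pos (by positivity) hu0.le hu1
  have hpow (p : ℝ) : HasDerivAt (fun u : ℝ => u ^ p) (p * u ^ (p - 1)) u :=
    hasDerivAt_rpow_const (Or.inl hu0.ne')
  have hroot := ((hpow (2 * α)).const_sub 1).rpow_const (p := (1 : ℝ) / 2) (Or.inl hz.ne')
  refine ((hpow (1 - α)).mul hroot).congr_deriv ?_
  have hexp : u ^ (1 - α - 1) = u ^ (-α) := by ring_nf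
  have hpow_mul : u ^ (1 - α) * u ^ (2 * α - 1) = u ^ (-α) * u ^ (2 * α) := by
    rw [← rpow_add hu0, ← rpow_add hu0]; ring_nf
  have hhalf : (1 - u ^ (2 * α)) ^ ((1 : ℝ) / 2 - 1) = (1 - u ^ (2 * α)) ^ (-(1 : ℝ) / 2) := by
    norm_num
  have hsqrt : (1 - u ^ (2 * α)) ^ ((1 : ℝ) / 2)
      = (1 - u ^ (2 * α)) * (1 - u ^ (2 * α)) ^ (-(1 : ℝ) / 2) := by
    rw [← rpow_one_add' hz.le (by norm_num)]; norm_num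
  simp only [kernel, hexp, hhalf, hsqrt]
  linear_combination (-α * (1 - u ^ (2 * α)) ^ (-(1 : ℝ) / 2)) * hpow_mul

lemma intervalIntegrable_weight_mul_kernel (hα : 1 ≤ α) (hx : 0 < x) (hx1 : x ≤ 1) :
    IntervalIntegrable (fun u => (α - 1 + u ^ (2 * α)) * kernel α u) volume x 1 := by
  refine intervalIntegrable_deriv_of_nonneg (g := fun u => -boundaryTerm α u)
    (by rw [uIcc_of_le hx1]; exact (continuousOn_boundaryTerm hx).neg) ?_ ?_
  · intro u hu
    rw [min_eq_left hx1, max_eq_right hx1] at hu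
    have := (hasDerivAt_boundaryTerm (zero_lt_one.trans_le hα) (hx.trans hu.1) hu.2).neg
    rwa [neg_neg] at this
  · intro u hu
    rw [min_eq_left hx1, max_eq_right hx1] at hu
    have hu0 : 0 < u := hx.trans hu.1
    exact mul_nonneg (by linarith [rpow_nonneg hu0.le (2 * α)])
      (kernel_nonneg (by linarith) hu0.le hu.2.le)

lemma intervalIntegrable_kernel (hα : 1 ≤ α) (hx : 0 < x) (hx1 : x ≤ 1) :
    IntervalIntegrable (kernel α) volume x 1 := by
  have hw : ∀ u ∈ uIcc x 1, 0 < α - 1 + u ^ (2 * α) := fun u hu => by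
    rw [uIcc_of_le hx1] at hu
    linarith [rpow_pos_of_pos (hx.trans_le hu.1) (2 * α)]
  have hcont : ContinuousOn (fun u => (α - 1 + u ^ (2 * α))⁻¹) (uIcc x 1) :=
    ContinuousOn.inv₀ (continuousOn_const.add
      (continuousOn_id.rpow_const fun _ _ => Or.inr (by linarith))) fun u hu => (hw u hu).ne'
  refine ((intervalIntegrable_weight_mul_kernel hα hx hx1).continuousOn_mul hcont).congr ?_
  intro u hu
  rw [uIoc_of_le hx1] at hu
  exact inv_mul_cancel_left₀ (hw u (uIcc_of_le hx1 ▸ Ioc_subset_Icc_self hu)).ne' _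

lemma boundaryTerm_one : boundaryTerm α 1 = 0 := by
  simp [boundaryTerm]

lemma sub_one_mul_integral_kernel_le (hα : 1 ≤ α) (hx : 0 < x) (hx1 : x ≤ 1) :
    (α - 1) * ∫ u in x..1, kernel α u ≤ boundaryTerm α x := by
  have hweighted := intervalIntegrable_weight_mul_kernel hα hx hx1
  have hFTC : ∫ u in x..1, (α - 1 + u ^ (2 * α)) * kernel α u = boundaryTerm α x := by
    rw [integral_eq_sub_of_hasDerivAt_of_le hx1 (continuousOn_boundaryTerm hx).neg
      (fun u hu => by
        simpa only [neg_neg] using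
          (hasDerivAt_boundaryTerm (zero_lt_one.trans_le hα) (hx.trans hu.1) hu.2).neg)
      hweighted]
    simp [boundaryTerm_one]
  rw [← intervalIntegral.integral_const_mul, ← hFTC]
  refine integral_mono_on hx1 ((intervalIntegrable_kernel hα hx hx1).const_mul _) hweighted ?_
  intro u hu
  have hu0 : 0 < u := hx.trans_le hu.1
  exact mul_le_mul_of_nonneg_right (by linarith [rpow_nonneg hu0.le (2 * α)])
    (kernel_nonneg (by linarith) hu0.le hu.2)

lemma boundaryTerm_lt_mul_kernel (hα : 0 < α) (hx : 0 < x) (hx1 : x < 1) :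
    boundaryTerm α x < x * kernel α x := by
  have hz : 0 < 1 - x ^ (2 * α) := one_sub_rpow_pos (by positivity) hx.le hx1
  have hz1 : 1 - x ^ (2 * α) < 1 := by linarith [rpow_pos_of_pos hx (2 * α)]
  have hx_mul : x * x ^ (-α) = x ^ (1 - α) := by
    rw [sub_eq_add_neg, rpow_add hx, rpow_one]
  rw [kernel, ← mul_assoc, hx_mul, boundaryTerm]
  exact mul_lt_mul_of_pos_left (rpow_lt_rpow_of_exponent_gt hz hz1 (by norm_num))
    (rpow_pos_of_pos hx _)

lemma sub_one_mul_integral_kernel_lt (hα : 1 ≤ α) (hx : 0 < x) (hx1 : x < 1) :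
    (α - 1) * ∫ u in x..1, kernel α u < x * kernel α x :=
  (sub_one_mul_integral_kernel_le hα hx hx1.le).trans_lt
    (boundaryTerm_lt_mul_kernel (zero_lt_one.trans_le hα) hx hx1)

noncomputable def chi (α ts τ : ℝ) : ℝ :=
  ∫ t in ts..τ, (τ ^ α / t ^ α) * (τ ^ (2 * α) - t ^ (2 * α)) ^ (-(1 : ℝ) / 2)

variable {ts τ : ℝ}

lemma integrand_mul_left_eq (hα : 0 ≤ α) (hτ : 0 < τ) (hu0 : 0 < u) (hu1 : u ≤ 1) :
    τ ^ α / (τ * u) ^ α * (τ ^ (2 * α) - (τ * u) ^ (2 * α)) ^ (-(1 : ℝ) / 2)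
      = τ ^ (-α) * kernel α u := by
  have hdiff : τ ^ (2 * α) - (τ * u) ^ (2 * α) = τ ^ (2 * α) * (1 - u ^ (2 * α)) := by
    rw [mul_rpow hτ.le hu0.le]; ring
  have hsqrt : (τ ^ (2 * α)) ^ (-(1 : ℝ) / 2) = τ ^ (-α) := by
    rw [← rpow_mul hτ.le]; ring_nf
  have hquot : τ ^ α / (τ * u) ^ α = u ^ (-α) := by
    rw [mul_rpow hτ.le hu0.le, rpow_neg hu0.le]
    field_simp
  rw [hdiff, mul_rpow (rpow_nonneg hτ.le _) (one_sub_rpow_nonneg (by positivity) hu0.le hu1),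
    hsqrt, hquot, kernel]
  ring

lemma chi_eq_rpow_mul_integral_kernel (hα : 0 ≤ α) (hts : 0 < ts) (hτ : ts ≤ τ) :
    chi α ts τ = τ ^ (1 - α) * ∫ u in ts / τ..1, kernel α u := by
  have hτ0 : 0 < τ := hts.trans_le hτ
  have hx1 : ts / τ ≤ 1 := (div_le_one hτ0).2 hτ
  have hsubst := smul_integral_comp_mul_left (a := ts / τ) (b := 1)
    (fun t => (τ ^ α / t ^ α) * (τ ^ (2 * α) - t ^ (2 * α)) ^ (-(1 : ℝ) / 2)) τ
  rw [mul_div_cancel₀ _ hτ0.ne', mul_one] at hsubst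
  rw [chi, ← hsubst, integral_congr fun u hu => integrand_mul_left_eq hα hτ0
      ((div_pos hts hτ0).trans_le (uIcc_of_le hx1 ▸ hu).1) (uIcc_of_le hx1 ▸ hu).2,
    intervalIntegral.integral_const_mul, smul_eq_mul, ← mul_assoc, sub_eq_add_neg,
    rpow_add hτ0, rpow_one]

lemma hasDerivAt_chi (hα : 1 ≤ α) (hts : 0 < ts) (hτ : ts < τ) :
    HasDerivAt (chi α ts)
      (τ ^ (-α) * (ts / τ * kernel α (ts / τ) - (α - 1) * ∫ u in ts / τ..1, kernel α u)) τ := by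
  have hα0 : 0 < α := zero_lt_one.trans_le hα
  have hτ0 : 0 < τ := hts.trans hτ
  have hx0 : 0 < ts / τ := div_pos hts hτ0
  have hx1 : ts / τ < 1 := (div_lt_one hτ0).2 hτ
  have hK : HasDerivAt (fun y => ∫ u in y..1, kernel α u) (-kernel α (ts / τ)) (ts / τ) :=
    integral_hasDerivAt_left (intervalIntegrable_kernel hα hx0 hx1.le)
      ((continuousOn_kernel hα0).stronglyMeasurableAtFilter isOpen_Ioo _ ⟨hx0, hx1⟩)
      ((continuousOn_kernel hα0).continuousAt (Ioo_mem_nhds hx0 hx1))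
  have hquot : HasDerivAt (fun σ => ts / σ) (-(ts / τ ^ 2)) τ := by
    simpa [div_eq_mul_inv] using (hasDerivAt_inv hτ0.ne').const_mul ts
  have hprod := (hasDerivAt_rpow_const (p := 1 - α) (Or.inl hτ0.ne')).mul (hK.comp τ hquot)
  have hchi : (fun σ => σ ^ (1 - α) * ∫ u in ts / σ..1, kernel α u) =ᶠ[𝓝 τ] chi α ts :=
    eventually_of_mem (Ioi_mem_nhds hτ) fun σ hσ =>
      (chi_eq_rpow_mul_integral_kernel hα0.le hts hσ.le).symm
  refine (hprod.congr_of_eventuallyEq hchi.symm).congr_deriv ?_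
  rw [Function.comp_apply, show 1 - α - 1 = -α by ring, sub_eq_add_neg 1 α, rpow_add hτ0, rpow_one]
  field_simp
  ring

lemma deriv_chi_pos (hα : 1 ≤ α) (hts : 0 < ts) (hτ : ts < τ) : 0 < deriv (chi α ts) τ := by
  have hτ0 : 0 < τ := hts.trans hτ
  rw [(hasDerivAt_chi hα hts hτ).deriv]
  exact mul_pos (rpow_pos_of_pos hτ0 _) (sub_pos.2 (sub_one_mul_integral_kernel_lt hα
    (div_pos hts hτ0) ((div_lt_one hτ0).2 hτ)))

end ChiCoordinate

open ChiCoordinate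

/-- For `α > 1` and fixed `t_s > 0`, the function
`τ ↦ χ_s(τ) = ∫_{t_s}^{τ} (τ^α / t^α) (τ^{2α} - t^{2α})^{-1/2} dt` is strictly increasing
on `(t_s, ∞)`; equivalently, its derivative is positive at every `τ > t_s`. -/
theorem chi_s_strictMono (α ts : ℝ) (hα : 1 < α) (hts : 0 < ts) :
    StrictMonoOn (fun τ : ℝ =>
        ∫ t in ts..τ, (τ ^ α / t ^ α) * (τ ^ (2 * α) - t ^ (2 * α)) ^ (-(1 : ℝ) / 2))
      (Set.Ioi ts) ∧
    ∀ τ : ℝ, ts < τ →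
      0 < deriv (fun τ : ℝ =>
        ∫ t in ts..τ, (τ ^ α / t ^ α) * (τ ^ (2 * α) - t ^ (2 * α)) ^ (-(1 : ℝ) / 2)) τ := by
  change StrictMonoOn (chi α ts) (Ioi ts) ∧ ∀ τ, ts < τ → 0 < deriv (chi α ts) τ
  refine ⟨strictMonoOn_of_deriv_pos (convex_Ioi ts) ?_ ?_, fun τ => deriv_chi_pos hα.le hts⟩
  · exact fun τ hτ => (hasDerivAt_chi hα.le hts hτ).continuousAt.continuousWithinAt
  · rw [interior_Ioi]
    exact fun τ => deriv_chi_pos hα.le hts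
end

section
/- Let C_α := √π · Γ((1+α)/(2α)) / Γ(1/(2α)). Then C_α > 1 for every α with 0 < α < 1, and C_α < 1 for every α > 1. -/
open Real

namespace CAlphaAux

open MeasureTheory intervalIntegral Set

/-- The real Beta integrand with second parameter `1/2`. -/
noncomputable def F (s : ℝ) (x : ℝ) : ℝ := x ^ (s - 1) * (1 - x) ^ ((1:ℝ)/2 - 1)

lemma key_eq (s : ℝ) {x : ℝ} (hx0 : 0 ≤ x) (hx1 : x ≤ 1) :
    (x : ℂ) ^ ((s : ℂ) - 1) * (1 - (x : ℂ)) ^ ((1/2 : ℂ) - 1) = ((F s x : ℝ) : ℂ) := by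
  have h1 : ((x ^ (s - 1) : ℝ) : ℂ) = (x : ℂ) ^ ((s : ℂ) - 1) := by
    rw [Complex.ofReal_cpow hx0]; push_cast; ring_nf
  have h2 : (((1 - x) ^ ((1:ℝ)/2 - 1) : ℝ) : ℂ) = (1 - (x : ℂ)) ^ ((1/2 : ℂ) - 1) := by
    rw [Complex.ofReal_cpow (by linarith)]; push_cast; ring_nf
  rw [F]; push_cast [← h1, ← h2]; ring

lemma intInt (s : ℝ) (hs : 0 < s) : IntervalIntegrable (F s) volume 0 1 := by
  have hC : IntervalIntegrable
      (fun x : ℝ => (x : ℂ) ^ ((s:ℂ) - 1) * (1 - (x : ℂ)) ^ ((1/2 : ℂ) - 1)) volume 0 1 :=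
    Complex.betaIntegral_convergent (by simpa using hs) (by norm_num)
  rw [intervalIntegrable_iff] at hC ⊢
  have hre : MeasureTheory.IntegrableOn
      (fun x : ℝ => ((x : ℂ) ^ ((s:ℂ) - 1) * (1 - (x : ℂ)) ^ ((1/2 : ℂ) - 1)).re)
      (Set.uIoc 0 1) volume := hC.re
  refine hre.congr_fun (fun x hx => ?_) measurableSet_uIoc
  rw [Set.uIoc_of_le (by norm_num : (0:ℝ) ≤ 1)] at hx
  simp only [key_eq s hx.1.le hx.2, Complex.ofReal_re]

lemma beta_formula (s : ℝ) (hs : 0 < s) :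
    Real.Gamma s * Real.sqrt π = Real.Gamma (s + 1/2) * ∫ x in (0:ℝ)..1, F s x := by
  have h := Complex.Gamma_mul_Gamma_eq_betaIntegral (s := (s : ℂ)) (t := (1/2 : ℂ))
    (by simpa using hs) (by norm_num)
  have hbeta : Complex.betaIntegral (s : ℂ) (1/2 : ℂ) = ((∫ x in (0:ℝ)..1, F s x : ℝ) : ℂ) := by
    rw [Complex.betaIntegral, ← intervalIntegral.integral_ofReal]
    refine intervalIntegral.integral_congr fun x hx => ?_
    rw [Set.uIcc_of_le (by norm_num : (0:ℝ) ≤ 1)] at hx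
    exact key_eq s hx.1 hx.2
  rw [hbeta] at h
  have h1 : Complex.Gamma (s : ℂ) = ((Real.Gamma s : ℝ) : ℂ) := Complex.Gamma_ofReal s
  have h2 : Complex.Gamma (1/2 : ℂ) = ((Real.sqrt π : ℝ) : ℂ) := by
    rw [(by push_cast; ring : (1/2 : ℂ) = ((1/2 : ℝ) : ℂ)), Complex.Gamma_ofReal,
      Real.Gamma_one_half_eq]
  have h3 : Complex.Gamma ((s : ℂ) + 1/2) = ((Real.Gamma (s + 1/2) : ℝ) : ℂ) := by
    rw [(by push_cast; ring : ((s : ℂ) + 1/2) = ((s + 1/2 : ℝ) : ℂ)), Complex.Gamma_ofReal]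
  rw [h1, h2, h3] at h
  exact_mod_cast h

lemma mono {s s' : ℝ} (hs : 0 < s) (hss' : s < s') :
    (∫ x in (0:ℝ)..1, F s' x) < ∫ x in (0:ℝ)..1, F s x := by
  have hI := intInt s hs
  have hI' := intInt s' (hs.trans hss')
  have hpos : 0 < ∫ x in (0:ℝ)..1, (F s x - F s' x) := by
    refine intervalIntegral_pos_of_pos_on (hI.sub hI') (fun x hx => ?_) (by norm_num)
    have hx0 : 0 < x := hx.1
    have hx1 : x < 1 := hx.2
    have h1 : x ^ (s' - 1) < x ^ (s - 1) :=
      Real.rpow_lt_rpow_of_exponent_gt hx0 hx1 (by linarith)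
    have h2 : (0:ℝ) < (1 - x) ^ ((1:ℝ)/2 - 1) :=
      Real.rpow_pos_of_pos (by linarith) _
    have : F s' x < F s x := by
      unfold F
      exact mul_lt_mul_of_pos_right h1 h2
    linarith
  rwa [intervalIntegral.integral_sub hI hI', sub_pos] at hpos

lemma beta_half : (∫ x in (0:ℝ)..1, F (1/2) x) = π := by
  have h := beta_formula (1/2) (by norm_num)
  rw [Real.Gamma_one_half_eq, (by norm_num : (1:ℝ)/2 + 1/2 = 1), Real.Gamma_one,
    Real.mul_self_sqrt pi_pos.le, one_mul] at h
  exact h.symm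

end CAlphaAux

/-- With `C_α = √π Γ((1+α)/(2α)) / Γ(1/(2α))`, one has `C_α > 1` for every
`0 < α < 1` and `C_α < 1` for every `α > 1`. -/
theorem C_alpha_vs_one :
    (∀ α : ℝ, 0 < α → α < 1 →
      1 < Real.sqrt π * Real.Gamma ((1 + α) / (2 * α)) / Real.Gamma (1 / (2 * α))) ∧
    (∀ α : ℝ, 1 < α →
      Real.sqrt π * Real.Gamma ((1 + α) / (2 * α)) / Real.Gamma (1 / (2 * α)) < 1) := by
  have hsp : 0 < Real.sqrt π := Real.sqrt_pos.mpr pi_pos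
  have hsq : Real.sqrt π * Real.sqrt π = π := Real.mul_self_sqrt pi_pos.le
  constructor
  · intro α hα0 hα1
    set s : ℝ := 1 / (2 * α) with hs_def
    have hs : 0 < s := by positivity
    have h12 : (1:ℝ)/2 < s := by
      rw [hs_def]
      exact one_div_lt_one_div_of_lt (by linarith) (by linarith)
    have harg : (1 + α) / (2 * α) = s + 1/2 := by
      rw [hs_def]; field_simp
    have hB : (∫ x in (0:ℝ)..1, CAlphaAux.F s x) < π := by
      rw [← CAlphaAux.beta_half]
      exact CAlphaAux.mono (by norm_num) h12
    have hf := CAlphaAux.beta_formula s hs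
    have hGs : 0 < Real.Gamma s := Real.Gamma_pos_of_pos hs
    have hGs' : 0 < Real.Gamma (s + 1/2) := Real.Gamma_pos_of_pos (by linarith)
    rw [harg, lt_div_iff₀ hGs, one_mul]
    nlinarith [mul_lt_mul_of_pos_left hB hGs']
  · intro α hα
    set s : ℝ := 1 / (2 * α) with hs_def
    have hs : 0 < s := by positivity
    have h12 : s < (1:ℝ)/2 := by
      rw [hs_def]
      exact one_div_lt_one_div_of_lt (by norm_num) (by linarith)
    have harg : (1 + α) / (2 * α) = s + 1/2 := by
      rw [hs_def]; field_simp
    have hB : π < ∫ x in (0:ℝ)..1, CAlphaAux.F s x := by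
      rw [← CAlphaAux.beta_half]
      exact CAlphaAux.mono hs h12
    have hf := CAlphaAux.beta_formula s hs
    have hGs : 0 < Real.Gamma s := Real.Gamma_pos_of_pos hs
    have hGs' : 0 < Real.Gamma (s + 1/2) := Real.Gamma_pos_of_pos (by linarith)
    rw [harg, div_lt_iff₀ hGs, one_mul]
    nlinarith [mul_lt_mul_of_pos_left hB hGs']
end

section
/- The function α ↦ C_α := √π · Γ((1+α)/(2α)) / Γ(1/(2α)) is strictly decreasing on (0, ∞), and C_α → 0 as α → +∞. -/
open Real Filter Set

/-- Key inequality: `Γ(y)Γ(x+1/2) < Γ(x)Γ(y+1/2)` for `0 < x < y`, i.e. the ratio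
`Γ(x+1/2)/Γ(x)` is strictly increasing. Proved via Euler's limit formula. -/
private lemma gamma_ratio_lt {x y : ℝ} (hx : 0 < x) (hxy : x < y) :
    Real.Gamma y * Real.Gamma (x + 1 / 2) < Real.Gamma x * Real.Gamma (y + 1 / 2) := by
  have hy : 0 < y := hx.trans hxy
  set c : ℝ := x * (y + 1 / 2) / (y * (x + 1 / 2)) with hc
  have hden : 0 < y * (x + 1 / 2) := by positivity
  have hc1 : c < 1 := by
    rw [hc, div_lt_one hden]; nlinarith
  have hcpos : 0 < c := by positivity
  have key : ∀ n : ℕ, Real.GammaSeq y n * Real.GammaSeq (x + 1 / 2) n ≤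
      c * (Real.GammaSeq x n * Real.GammaSeq (y + 1 / 2) n) := by
    intro n
    have hM : (n : ℝ) ^ y * (n : ℝ) ^ (x + 1 / 2) = (n : ℝ) ^ x * (n : ℝ) ^ (y + 1 / 2) := by
      rcases Nat.eq_zero_or_pos n with hn | hn
      · subst hn
        simp [Real.zero_rpow hy.ne', Real.zero_rpow hx.ne']
      · have hnp : (0 : ℝ) < n := by exact_mod_cast hn
        rw [← Real.rpow_add hnp, ← Real.rpow_add hnp]
        ring_nf
    have hPy : (0 : ℝ) < ∏ j ∈ Finset.range (n + 1), (y + (j : ℝ)) :=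
      Finset.prod_pos fun j _ => by positivity
    have hPx : (0 : ℝ) < ∏ j ∈ Finset.range (n + 1), (x + (j : ℝ)) :=
      Finset.prod_pos fun j _ => by positivity
    have hPx' : (0 : ℝ) < ∏ j ∈ Finset.range (n + 1), (x + 1 / 2 + (j : ℝ)) :=
      Finset.prod_pos fun j _ => by positivity
    have hPy' : (0 : ℝ) < ∏ j ∈ Finset.range (n + 1), (y + 1 / 2 + (j : ℝ)) :=
      Finset.prod_pos fun j _ => by positivity
    have hprod : (∏ j ∈ Finset.range (n + 1), (x + (j : ℝ))) *
        (∏ j ∈ Finset.range (n + 1), (y + 1 / 2 + (j : ℝ))) ≤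
        c * ((∏ j ∈ Finset.range (n + 1), (y + (j : ℝ))) *
          (∏ j ∈ Finset.range (n + 1), (x + 1 / 2 + (j : ℝ)))) := by
      rw [← Finset.prod_mul_distrib, ← Finset.prod_mul_distrib,
        Finset.prod_range_succ', Finset.prod_range_succ']
      push_cast
      have h0 : (x + 0) * (y + 1 / 2 + 0) = c * ((y + 0) * (x + 1 / 2 + 0)) := by
        rw [hc, div_mul_eq_mul_div, eq_div_iff hden.ne']
        ring
      have hterm : ∀ j ∈ Finset.range n,
          (x + ((j : ℝ) + 1)) * (y + 1 / 2 + ((j : ℝ) + 1)) ≤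
          (y + ((j : ℝ) + 1)) * (x + 1 / 2 + ((j : ℝ) + 1)) := by
        intro j _
        nlinarith [Nat.cast_nonneg (α := ℝ) j]
      have hP : (∏ j ∈ Finset.range n, (x + ((j : ℝ) + 1)) * (y + 1 / 2 + ((j : ℝ) + 1))) ≤
          ∏ j ∈ Finset.range n, (y + ((j : ℝ) + 1)) * (x + 1 / 2 + ((j : ℝ) + 1)) := by
        refine Finset.prod_le_prod (fun j _ => by positivity) hterm
      calc (∏ j ∈ Finset.range n, (x + ((j : ℝ) + 1)) * (y + 1 / 2 + ((j : ℝ) + 1))) *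
            ((x + 0) * (y + 1 / 2 + 0))
          ≤ (∏ j ∈ Finset.range n, (y + ((j : ℝ) + 1)) * (x + 1 / 2 + ((j : ℝ) + 1))) *
            ((x + 0) * (y + 1 / 2 + 0)) := by
            refine mul_le_mul_of_nonneg_right hP (by positivity)
        _ = c * ((∏ j ∈ Finset.range n, (y + ((j : ℝ) + 1)) * (x + 1 / 2 + ((j : ℝ) + 1))) *
            ((y + 0) * (x + 1 / 2 + 0))) := by rw [h0]; ring
    have e1 : Real.GammaSeq y n * Real.GammaSeq (x + 1 / 2) n =
        ((n : ℝ) ^ y * (n : ℝ) ^ (x + 1 / 2) * ((n.factorial : ℝ) * (n.factorial : ℝ))) /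
          ((∏ j ∈ Finset.range (n + 1), (y + (j : ℝ))) *
            (∏ j ∈ Finset.range (n + 1), (x + 1 / 2 + (j : ℝ)))) := by
      rw [Real.GammaSeq, Real.GammaSeq, div_mul_div_comm]
      congr 1
      ring
    have e2 : Real.GammaSeq x n * Real.GammaSeq (y + 1 / 2) n =
        ((n : ℝ) ^ x * (n : ℝ) ^ (y + 1 / 2) * ((n.factorial : ℝ) * (n.factorial : ℝ))) /
          ((∏ j ∈ Finset.range (n + 1), (x + (j : ℝ))) *
            (∏ j ∈ Finset.range (n + 1), (y + 1 / 2 + (j : ℝ)))) := by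
      rw [Real.GammaSeq, Real.GammaSeq, div_mul_div_comm]
      congr 1
      ring
    rw [e1, e2, ← mul_div_assoc,
      div_le_div_iff₀ (by positivity) (mul_pos hPx hPy')]
    calc ((n : ℝ) ^ y * (n : ℝ) ^ (x + 1 / 2) * ((n.factorial : ℝ) * (n.factorial : ℝ))) *
          ((∏ j ∈ Finset.range (n + 1), (x + (j : ℝ))) *
            (∏ j ∈ Finset.range (n + 1), (y + 1 / 2 + (j : ℝ))))
        ≤ ((n : ℝ) ^ y * (n : ℝ) ^ (x + 1 / 2) * ((n.factorial : ℝ) * (n.factorial : ℝ))) *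
          (c * ((∏ j ∈ Finset.range (n + 1), (y + (j : ℝ))) *
            (∏ j ∈ Finset.range (n + 1), (x + 1 / 2 + (j : ℝ))))) := by
          refine mul_le_mul_of_nonneg_left hprod (by positivity)
      _ = c * ((n : ℝ) ^ x * (n : ℝ) ^ (y + 1 / 2) * ((n.factorial : ℝ) * (n.factorial : ℝ))) *
          ((∏ j ∈ Finset.range (n + 1), (y + (j : ℝ))) *
            (∏ j ∈ Finset.range (n + 1), (x + 1 / 2 + (j : ℝ)))) := by
          rw [hM]; ring
  have hA := (Real.GammaSeq_tendsto_Gamma y).mul (Real.GammaSeq_tendsto_Gamma (x + 1 / 2))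
  have hB := ((Real.GammaSeq_tendsto_Gamma x).mul
    (Real.GammaSeq_tendsto_Gamma (y + 1 / 2))).const_mul c
  have hle : Real.Gamma y * Real.Gamma (x + 1 / 2) ≤
      c * (Real.Gamma x * Real.Gamma (y + 1 / 2)) :=
    le_of_tendsto_of_tendsto' hA hB key
  have hBpos : 0 < Real.Gamma x * Real.Gamma (y + 1 / 2) :=
    mul_pos (Real.Gamma_pos_of_pos hx) (Real.Gamma_pos_of_pos (by linarith))
  calc Real.Gamma y * Real.Gamma (x + 1 / 2)
      ≤ c * (Real.Gamma x * Real.Gamma (y + 1 / 2)) := hle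
    _ < 1 * (Real.Gamma x * Real.Gamma (y + 1 / 2)) :=
        mul_lt_mul_of_pos_right hc1 hBpos
    _ = _ := one_mul _

private lemma arg_rewrite {α : ℝ} (hα : 0 < α) :
    (1 + α) / (2 * α) = 1 / (2 * α) + 1 / 2 := by
  field_simp

/-- The function `α ↦ C_α = √π Γ((1+α)/(2α)) / Γ(1/(2α))` is strictly
decreasing on `(0, ∞)`, and `C_α → 0` as `α → +∞`. -/
theorem C_alpha_strictAnti_tendsto_zero :
    StrictAntiOn
      (fun α : ℝ => Real.sqrt π * Real.Gamma ((1 + α) / (2 * α)) / Real.Gamma (1 / (2 * α)))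
      (Set.Ioi 0) ∧
    Tendsto
      (fun α : ℝ => Real.sqrt π * Real.Gamma ((1 + α) / (2 * α)) / Real.Gamma (1 / (2 * α)))
      atTop (nhds 0) := by
  have hsp : (0 : ℝ) < Real.sqrt π := Real.sqrt_pos.mpr Real.pi_pos
  constructor
  · intro a ha b hb hab
    simp only [Set.mem_Ioi] at ha hb
    set x : ℝ := 1 / (2 * b) with hxdef
    set y : ℝ := 1 / (2 * a) with hydef
    have hx : 0 < x := by positivity
    have hxy : x < y := by
      rw [hxdef, hydef]
      apply one_div_lt_one_div_of_lt <;> linarith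
    have hy : 0 < y := hx.trans hxy
    have hΓx : 0 < Real.Gamma x := Real.Gamma_pos_of_pos hx
    have hΓy : 0 < Real.Gamma y := Real.Gamma_pos_of_pos hy
    have key := gamma_ratio_lt hx hxy
    simp only
    rw [arg_rewrite hb, arg_rewrite ha, ← hxdef, ← hydef,
      div_lt_div_iff₀ hΓx hΓy]
    nlinarith [mul_lt_mul_of_pos_left key hsp]
  · have h2 : Tendsto (fun α : ℝ => 2 * α) atTop atTop :=
      Tendsto.const_mul_atTop two_pos tendsto_id
    have h1 : Tendsto (fun α : ℝ => 1 / (2 * α)) atTop (nhds 0) :=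
      Tendsto.div_atTop tendsto_const_nhds h2
    set g : ℝ → ℝ := fun x => Real.sqrt π * Real.Gamma (x + 1 / 2) * (x / Real.Gamma (x + 1))
      with hgdef
    have hg0 : g 0 = 0 := by simp [hgdef]
    have hcg : ContinuousAt g 0 := by
      have hhalf : ∀ m : ℕ, (0 : ℝ) + 1 / 2 ≠ -m := by
        intro m h
        have : (0 : ℝ) ≤ m := Nat.cast_nonneg m
        rw [zero_add] at h
        linarith
      have hone : ∀ m : ℕ, (0 : ℝ) + 1 ≠ -m := by
        intro m h
        have : (0 : ℝ) ≤ m := Nat.cast_nonneg m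
        rw [zero_add] at h
        linarith
      have c1 : ContinuousAt (fun x : ℝ => Real.Gamma (x + 1 / 2)) 0 :=
        ContinuousAt.comp (x := (0 : ℝ)) (g := Real.Gamma) (f := fun x : ℝ => x + 1 / 2)
          (Real.differentiableAt_Gamma hhalf).continuousAt
          ((continuous_id.add continuous_const).continuousAt)
      have c2 : ContinuousAt (fun x : ℝ => Real.Gamma (x + 1)) 0 :=
        ContinuousAt.comp (x := (0 : ℝ)) (g := Real.Gamma) (f := fun x : ℝ => x + 1)
          (Real.differentiableAt_Gamma hone).continuousAt
          ((continuous_id.add continuous_const).continuousAt)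
      have hne : Real.Gamma ((0 : ℝ) + 1) ≠ 0 := by
        rw [zero_add, Real.Gamma_one]; norm_num
      exact (continuousAt_const.mul c1).mul (continuousAt_id.div c2 hne)
    have hcomp : Tendsto (fun α : ℝ => g (1 / (2 * α))) atTop (nhds 0) := by
      have := hcg.tendsto.comp h1
      rwa [hg0] at this
    refine hcomp.congr' ?_
    filter_upwards [eventually_gt_atTop (0 : ℝ)] with α hα
    have hx : 0 < 1 / (2 * α) := by positivity
    have hΓx : 0 < Real.Gamma (1 / (2 * α)) := Real.Gamma_pos_of_pos hx
    have hrec : Real.Gamma (1 / (2 * α) + 1) = (1 / (2 * α)) * Real.Gamma (1 / (2 * α)) :=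
      Real.Gamma_add_one hx.ne'
    rw [hgdef]
    simp only
    rw [hrec, arg_rewrite hα]
    field_simp
end

section
/- Let α > 1. For every s with 0 < s < 1, φ_α(s) := s^{1−α}·√(1 − s^{2α}) + (1 − α)·(1 − s^{2α})·∫_s^1 u^{−α}(1 − u^{2α})^{−1/2} du < 1. -/
open Real MeasureTheory intervalIntegral

/-- For `α > 1` and `0 < s < 1`, the Fermi relative speed of a comoving particle
`φ_α(s) = s^{1-α} √(1 - s^{2α}) + (1-α)(1 - s^{2α}) ∫_s^1 u^{-α} (1 - u^{2α})^{-1/2} du`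
is strictly less than `1`: no superluminal Fermi velocities in inflationary power law
cosmologies. -/
theorem no_superluminal_fermi_inflationary (α s : ℝ) (hα : 1 < α) (hs0 : 0 < s) (hs1 : s < 1) :
    s ^ (1 - α) * Real.sqrt (1 - s ^ (2 * α)) +
      (1 - α) * (1 - s ^ (2 * α)) *
        ∫ u in s..(1 : ℝ), u ^ (-α) * (1 - u ^ (2 * α)) ^ (-(1 : ℝ) / 2) < 1 := by
  have h2α : (0:ℝ) < 2 * α := by linarith
  have hsY : s ^ (2*α) < 1 := Real.rpow_lt_one hs0.le hs1 (by linarith)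
  have hsY0 : 0 < s ^ (2*α) := Real.rpow_pos_of_pos hs0 _
  set Y : ℝ := 1 - s ^ (2*α) with hYdef
  have hY0 : 0 < Y := by simp [hYdef]; linarith
  have hY1 : Y < 1 := by simp [hYdef]; linarith
  -- integrability of the integrand
  have hmeas : AEStronglyMeasurable
      (fun u : ℝ => u ^ (-α) * (1 - u ^ (2 * α)) ^ (-(1 : ℝ) / 2))
      (volume.restrict (Set.uIoc s 1)) := by
    apply Measurable.aestronglyMeasurable
    fun_prop
  have hgint : IntervalIntegrable
      (fun u : ℝ => s ^ (-α) * (1 - u) ^ (-(1:ℝ)/2)) volume s 1 := by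
    have h1 : IntervalIntegrable (fun x : ℝ => x ^ (-(1:ℝ)/2)) volume 0 (1 - s) :=
      intervalIntegrable_rpow' (by norm_num)
    have h2 := (h1.comp_sub_left 1)
    simp only [sub_zero, sub_sub_cancel] at h2
    exact (h2.symm).const_mul _
  have hfint : IntervalIntegrable
      (fun u : ℝ => u ^ (-α) * (1 - u ^ (2 * α)) ^ (-(1 : ℝ) / 2)) volume s 1 := by
    refine hgint.mono_fun hmeas ?_
    filter_upwards [ae_restrict_mem measurableSet_uIoc] with u hu
    rw [Set.uIoc_of_le hs1.le] at hu
    have hu0 : 0 < u := lt_trans hs0 hu.1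
    have hu1 : u ≤ 1 := hu.2
    have hb1 : u ^ (-α) ≤ s ^ (-α) :=
      Real.rpow_le_rpow_of_nonpos hs0 hu.1.le (by linarith)
    have hb2 : (1 - u ^ (2*α)) ^ (-(1:ℝ)/2) ≤ (1 - u) ^ (-(1:ℝ)/2) := by
      rcases eq_or_lt_of_le hu1 with h | h
      · subst h; simp
      · have hle : u ^ (2*α) ≤ u := by
          have := Real.rpow_le_rpow_of_exponent_ge hu0 h.le (by linarith : (1:ℝ) ≤ 2*α)
          simpa using this
        exact Real.rpow_le_rpow_of_nonpos (by linarith) (by linarith) (by norm_num)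
    have h1u : (0:ℝ) ≤ 1 - u ^ (2*α) := by
      have h := Real.rpow_le_one hu0.le hu1 h2α.le
      linarith
    have hf0 : 0 ≤ u ^ (-α) * (1 - u ^ (2*α)) ^ (-(1:ℝ)/2) :=
      mul_nonneg (Real.rpow_nonneg hu0.le _) (Real.rpow_nonneg h1u _)
    have hg0 : 0 ≤ s ^ (-α) * (1 - u) ^ (-(1:ℝ)/2) :=
      mul_nonneg (Real.rpow_nonneg hs0.le _) (Real.rpow_nonneg (by linarith) _)
    rw [Real.norm_eq_abs, Real.norm_eq_abs, abs_of_nonneg hf0, abs_of_nonneg hg0]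
    exact mul_le_mul hb1 hb2 (Real.rpow_nonneg h1u _) (Real.rpow_nonneg hs0.le _)
  -- pointwise lower bound and integral comparison
  have hlowint : IntervalIntegrable
      (fun u : ℝ => Y ^ (-(1:ℝ)/2) * u ^ (-α)) volume s 1 := by
    apply ContinuousOn.intervalIntegrable
    apply ContinuousOn.mul continuousOn_const
    intro u hu
    rw [Set.uIcc_of_le hs1.le] at hu
    exact (Real.continuousAt_rpow_const u (-α) (Or.inl (by linarith [hu.1]))).continuousWithinAt
  have hmono : (∫ u in s..(1:ℝ), Y ^ (-(1:ℝ)/2) * u ^ (-α)) ≤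
      ∫ u in s..(1:ℝ), u ^ (-α) * (1 - u ^ (2 * α)) ^ (-(1 : ℝ) / 2) := by
    refine integral_mono_ae_restrict hs1.le hlowint hfint ?_
    have hne : ∀ᵐ u : ℝ ∂(volume.restrict (Set.Icc s 1)), u ≠ 1 := by
      refine (MeasureTheory.ae_restrict_of_ae ?_)
      rw [MeasureTheory.ae_iff]
      simp
    filter_upwards [ae_restrict_mem measurableSet_Icc, hne] with u hu hune
    have hu0 : 0 < u := lt_of_lt_of_le hs0 hu.1
    have hu1 : u < 1 := lt_of_le_of_ne hu.2 hune
    have hYu : 0 < 1 - u ^ (2*α) := by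
      have h := (Real.rpow_lt_one hu0.le hu1 h2α : u ^ (2*α) < 1)
      linarith
    have hle : 1 - u ^ (2*α) ≤ Y := by
      have : s ^ (2*α) ≤ u ^ (2*α) := Real.rpow_le_rpow hs0.le hu.1 h2α.le
      simp [hYdef]; linarith
    have h2 : Y ^ (-(1:ℝ)/2) ≤ (1 - u ^ (2*α)) ^ (-(1:ℝ)/2) :=
      Real.rpow_le_rpow_of_nonpos hYu hle (by norm_num)
    calc Y ^ (-(1:ℝ)/2) * u ^ (-α) ≤ (1 - u ^ (2*α)) ^ (-(1:ℝ)/2) * u ^ (-α) := by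
          apply mul_le_mul_of_nonneg_right h2 (by positivity)
      _ = u ^ (-α) * (1 - u ^ (2*α)) ^ (-(1:ℝ)/2) := by ring
  -- evaluate the lower integral
  have hEval : (∫ u in s..(1:ℝ), Y ^ (-(1:ℝ)/2) * u ^ (-α)) =
      Y ^ (-(1:ℝ)/2) * ((1 - s ^ (1 - α)) / (1 - α)) := by
    rw [intervalIntegral.integral_const_mul,
      integral_rpow (Or.inr ⟨by intro h; apply absurd h; intro h'; linarith,
        by rw [Set.uIcc_of_le hs1.le]; intro h; exact absurd h.1 (by linarith)⟩),
      show -α + 1 = 1 - α from by ring, Real.one_rpow]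
  set I := ∫ u in s..(1:ℝ), u ^ (-α) * (1 - u ^ (2 * α)) ^ (-(1 : ℝ) / 2) with hI
  have hIge : Y ^ (-(1:ℝ)/2) * ((1 - s ^ (1 - α)) / (1 - α)) ≤ I := hEval ▸ hmono
  -- key algebraic bound
  have hsqrt : Real.sqrt Y = Y ^ ((1:ℝ)/2) := Real.sqrt_eq_rpow Y
  have hYY : Y * Y ^ (-(1:ℝ)/2) = Real.sqrt Y := by
    rw [hsqrt, ← Real.rpow_one_add' (le_of_lt hY0) (by norm_num)]
    norm_num
  have hX1 : 1 < s ^ (1 - α) := Real.one_lt_rpow_iff_of_pos hs0 |>.mpr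
    (Or.inr ⟨hs1, by linarith⟩)
  have hkey : (1 - α) * Y * I ≤ Real.sqrt Y * (1 - s ^ (1 - α)) := by
    have hc : (1 - α) * Y < 0 := mul_neg_of_neg_of_pos (by linarith) hY0
    calc (1 - α) * Y * I ≤ (1 - α) * Y * (Y ^ (-(1:ℝ)/2) * ((1 - s ^ (1 - α)) / (1 - α))) :=
          mul_le_mul_of_nonpos_left hIge hc.le
      _ = (Y * Y ^ (-(1:ℝ)/2)) * ((1 - s ^ (1 - α)) / (1 - α) * (1 - α)) := by ring
      _ = (Y * Y ^ (-(1:ℝ)/2)) * (1 - s ^ (1 - α)) := by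
          rw [div_mul_cancel₀ _ (show (1:ℝ) - α ≠ 0 by intro h; linarith)]
      _ = Real.sqrt Y * (1 - s ^ (1 - α)) := by rw [hYY]
  have hsY1 : Real.sqrt Y < 1 := by
    rw [show (1:ℝ) = Real.sqrt 1 by simp]
    exact Real.sqrt_lt_sqrt hY0.le hY1
  calc s ^ (1 - α) * Real.sqrt Y + (1 - α) * Y * I
      ≤ s ^ (1 - α) * Real.sqrt Y + Real.sqrt Y * (1 - s ^ (1 - α)) := by linarith
    _ = Real.sqrt Y := by ring
    _ < 1 := hsY1
end

section
/- Let α > 0 with α ≠ 1. Then φ_α(s) := s^{1−α}·√(1 − s^{2α}) + (1 − α)·(1 − s^{2α})·∫_s^1 u^{−α}(1 − u^{2α})^{−1/2} du tends to C_α := √π · Γ((1+α)/(2α)) / Γ(1/(2α)) as s → 0⁺. -/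
/-!
Integration by parts, with
`d/du (u^{1-α} √(1 - u^{2α})) = ((1 - α) u^{-α} - u^α) (1 - u^{2α})^{-1/2}`,
rewrites `φ_α(s)` as `s^{1+α} √(1 - s^{2α}) + (1 - s^{2α}) ∫_s^1 u^α (1 - u^{2α})^{-1/2} du`.
Unlike the integral in `φ_α`, which diverges at `0` for `α ≥ 1`, the new integral converges on
`[0, 1]`, so the limit is `∫_0^1 u^α (1 - u^{2α})^{-1/2} du`. The substitution `t = u^{2α}` turns
it into `B((1 + α)/(2α), 1/2) / (2α)`, which is `C_α` because `Γ(1/2) = √π` and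
`Γ(1/(2α) + 1) = Γ(1/(2α)) / (2α)`.
-/

open Real MeasureTheory intervalIntegral Filter Set Topology

lemma ofReal_rpow_mul_one_sub_rpow_eqOn (a b : ℝ) :
    EqOn (fun x : ℝ => ((x ^ (a - 1) * (1 - x) ^ (b - 1) : ℝ) : ℂ))
      (fun x : ℝ => (x : ℂ) ^ ((a : ℂ) - 1) * (1 - (x : ℂ)) ^ ((b : ℂ) - 1)) (Icc 0 1) := by
  intro x hx
  push_cast
  rw [Complex.ofReal_cpow hx.1, Complex.ofReal_cpow (sub_nonneg.2 hx.2)]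
  push_cast
  ring_nf

theorem intervalIntegrable_rpow_mul_one_sub_rpow {a b : ℝ} (ha : 0 < a) (hb : 0 < b) :
    IntervalIntegrable (fun x : ℝ => x ^ (a - 1) * (1 - x) ^ (b - 1)) volume 0 1 := by
  have h := Complex.betaIntegral_convergent (u := a) (v := b) (by simpa) (by simpa)
  rw [intervalIntegrable_iff_integrableOn_Icc_of_le zero_le_one] at h ⊢
  have := (h.congr_fun (ofReal_rpow_mul_one_sub_rpow_eqOn a b).symm measurableSet_Icc).re
  simp only [Complex.ofReal_re, RCLike.re_to_complex] at this
  exact this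

theorem integral_rpow_mul_one_sub_rpow {a b : ℝ} (ha : 0 < a) (hb : 0 < b) :
    ∫ x in (0 : ℝ)..1, x ^ (a - 1) * (1 - x) ^ (b - 1) = ProbabilityTheory.beta a b := by
  rw [ProbabilityTheory.beta_eq_betaIntegralReal a b ha hb, Complex.betaIntegral,
    ← integral_congr (g := fun x : ℝ => (x : ℂ) ^ ((a : ℂ) - 1) * (1 - (x : ℂ)) ^ ((b : ℂ) - 1))
      (by simpa only [uIcc_of_le zero_le_one] using ofReal_rpow_mul_one_sub_rpow_eqOn a b),
    intervalIntegral.integral_ofReal, Complex.ofReal_re]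

lemma rpow_image_Ioo_zero_one {p : ℝ} (hp : 0 < p) : (· ^ p) '' Ioo (0 : ℝ) 1 = Ioo 0 1 := by
  ext y
  refine ⟨?_, fun hy => ⟨y ^ p⁻¹,
    ⟨rpow_pos_of_pos hy.1 _, rpow_lt_one hy.1.le hy.2 (by positivity)⟩, ?_⟩⟩
  · rintro ⟨x, hx, rfl⟩
    exact ⟨rpow_pos_of_pos hx.1 _, rpow_lt_one hx.1.le hx.2 hp⟩
  · simp [← rpow_mul hy.1.le, hp.ne']

section SubstitutionRpow

variable {E : Type*} [NormedAddCommGroup E] [NormedSpace ℝ E] {p : ℝ}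

lemma hasDerivWithinAt_rpow_const_Ioo_zero_one :
    ∀ x ∈ Ioo (0 : ℝ) 1, HasDerivWithinAt (· ^ p) (p * x ^ (p - 1)) (Ioo 0 1) x :=
  fun _ hx => (hasDerivAt_rpow_const (Or.inl hx.1.ne')).hasDerivWithinAt

lemma injOn_rpow_const_Ioo_zero_one (hp : 0 < p) : InjOn (· ^ p) (Ioo (0 : ℝ) 1) :=
  (rpow_left_injOn hp.ne').mono (Ioo_subset_Ioi_self.trans Ioi_subset_Ici_self)

theorem integrableOn_Ioo_zero_one_comp_rpow_iff (hp : 0 < p) (g : ℝ → E) :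
    IntegrableOn (fun x => (p * x ^ (p - 1)) • g (x ^ p)) (Ioo (0 : ℝ) 1) ↔
      IntegrableOn g (Ioo 0 1) := by
  have h := integrableOn_image_iff_integrableOn_abs_deriv_smul measurableSet_Ioo
    hasDerivWithinAt_rpow_const_Ioo_zero_one (injOn_rpow_const_Ioo_zero_one hp) g
  rw [rpow_image_Ioo_zero_one hp] at h
  rw [h]
  refine integrableOn_congr_fun (fun x hx => ?_) measurableSet_Ioo
  rw [abs_of_pos (mul_pos hp (rpow_pos_of_pos hx.1 _))]

theorem integral_Ioo_zero_one_comp_rpow (hp : 0 < p) (g : ℝ → E) :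
    ∫ x in Ioo (0 : ℝ) 1, (p * x ^ (p - 1)) • g (x ^ p) = ∫ y in Ioo 0 1, g y := by
  have h := integral_image_eq_integral_abs_deriv_smul measurableSet_Ioo
    hasDerivWithinAt_rpow_const_Ioo_zero_one (injOn_rpow_const_Ioo_zero_one hp) g
  rw [rpow_image_Ioo_zero_one hp] at h
  rw [h]
  refine setIntegral_congr_fun measurableSet_Ioo (fun x hx => ?_)
  rw [abs_of_pos (mul_pos hp (rpow_pos_of_pos hx.1 _))]

end SubstitutionRpow

section BetaIntegralRpow

variable {a b p : ℝ}

lemma beta_integrand_comp_rpow_eqOn (hp : 0 < p) :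
    EqOn (fun x : ℝ => (p * x ^ (p - 1)) • ((x ^ p) ^ ((a + 1) / p - 1) * (1 - x ^ p) ^ (b - 1)))
      (fun x => p * (x ^ a * (1 - x ^ p) ^ (b - 1))) (Ioo 0 1) := by
  intro x hx
  have hxp : x ^ (p - 1) * (x ^ p) ^ ((a + 1) / p - 1) = x ^ a := by
    rw [← rpow_mul hx.1.le, ← rpow_add hx.1]
    congr 1
    field_simp
    ring
  simp only [smul_eq_mul]
  rw [← hxp]
  ring

theorem intervalIntegrable_rpow_mul_one_sub_rpow_rpow (hp : 0 < p) (ha : -1 < a) (hb : 0 < b) :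
    IntervalIntegrable (fun u : ℝ => u ^ a * (1 - u ^ p) ^ (b - 1)) volume 0 1 := by
  have h := intervalIntegrable_rpow_mul_one_sub_rpow (a := (a + 1) / p) (b := b)
    (div_pos (by linarith) hp) hb
  rw [intervalIntegrable_iff_integrableOn_Ioo_of_le zero_le_one,
    ← integrableOn_Ioo_zero_one_comp_rpow_iff hp,
    integrableOn_congr_fun (beta_integrand_comp_rpow_eqOn hp) measurableSet_Ioo,
    IntegrableOn, integrable_const_mul_iff (isUnit_iff_ne_zero.2 hp.ne')] at h
  exact (intervalIntegrable_iff_integrableOn_Ioo_of_le zero_le_one).2 h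

theorem integral_rpow_mul_one_sub_rpow_rpow (hp : 0 < p) (ha : -1 < a) (hb : 0 < b) :
    ∫ u in (0 : ℝ)..1, u ^ a * (1 - u ^ p) ^ (b - 1) =
      ProbabilityTheory.beta ((a + 1) / p) b / p := by
  rw [← integral_rpow_mul_one_sub_rpow (div_pos (by linarith) hp) hb, eq_div_iff hp.ne',
    integral_of_le zero_le_one, integral_of_le zero_le_one, integral_Ioc_eq_integral_Ioo,
    integral_Ioc_eq_integral_Ioo,
    ← integral_Ioo_zero_one_comp_rpow hp (fun t => t ^ ((a + 1) / p - 1) * (1 - t) ^ (b - 1)),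
    setIntegral_congr_fun measurableSet_Ioo (beta_integrand_comp_rpow_eqOn hp),
    MeasureTheory.integral_const_mul, mul_comm]

end BetaIntegralRpow

section FermiSpeed

variable {α : ℝ}

lemma intervalIntegrable_rpow_mul_one_sub_rpow_two_mul (hα : 0 < α) :
    IntervalIntegrable (fun u : ℝ => u ^ α * (1 - u ^ (2 * α)) ^ (-(1 : ℝ) / 2)) volume 0 1 := by
  convert intervalIntegrable_rpow_mul_one_sub_rpow_rpow (a := α) (b := 1 / 2)
    (by positivity : 0 < 2 * α) (by linarith) one_half_pos using 4
  norm_num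

lemma integral_rpow_mul_one_sub_rpow_two_mul (hα : 0 < α) :
    ∫ u in (0 : ℝ)..1, u ^ α * (1 - u ^ (2 * α)) ^ (-(1 : ℝ) / 2) =
      √π * Gamma ((1 + α) / (2 * α)) / Gamma (1 / (2 * α)) := by
  have h := integral_rpow_mul_one_sub_rpow_rpow (a := α) (b := 1 / 2)
    (by positivity : 0 < 2 * α) (by linarith) one_half_pos
  have hsum : (α + 1) / (2 * α) + 1 / 2 = 1 / (2 * α) + 1 := by field_simp; ring
  rw [show (1 / 2 : ℝ) - 1 = -1 / 2 by norm_num] at h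
  rw [h, ProbabilityTheory.beta, hsum, Gamma_add_one (by positivity), Gamma_one_half_eq, add_comm α]
  field_simp

lemma hasDerivAt_rpow_one_sub_mul_sqrt (hα : 0 < α) {x : ℝ} (hx : x ∈ Ioo (0 : ℝ) 1) :
    HasDerivAt (fun u : ℝ => u ^ (1 - α) * √(1 - u ^ (2 * α)))
      ((1 - α) * (x ^ (-α) * (1 - x ^ (2 * α)) ^ (-(1 : ℝ) / 2))
        - x ^ α * (1 - x ^ (2 * α)) ^ (-(1 : ℝ) / 2)) x := by
  obtain ⟨hx0, hx1⟩ := hx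
  have hw : 0 < 1 - x ^ (2 * α) := sub_pos.2 (rpow_lt_one hx0.le hx1 (by positivity))
  have hpow := (hasDerivAt_rpow_const (p := 1 - α) (Or.inl hx0.ne')).mul
    (((hasDerivAt_rpow_const (p := 2 * α) (Or.inl hx0.ne')).const_sub 1).sqrt hw.ne')
  refine hpow.congr_deriv ?_
  set r := √(1 - x ^ (2 * α))
  have hr0 : 0 < r := sqrt_pos.2 hw
  have hr2 : r ^ 2 = 1 - x ^ (2 * α) := sq_sqrt hw.le
  have hinv : (1 - x ^ (2 * α)) ^ (-(1 : ℝ) / 2) = r⁻¹ := by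
    rw [neg_div, rpow_neg hw.le, ← sqrt_eq_rpow]
  have e1 : x ^ (1 - α - 1) = x ^ (-α) := by ring_nf
  have e2 : x ^ (1 - α) = x * x ^ (-α) := by
    rw [sub_eq_add_neg, rpow_add hx0, rpow_one]
  have e3 : x ^ (2 * α - 1) = x ^ (2 * α) * x⁻¹ := by
    rw [rpow_sub hx0, rpow_one, div_eq_mul_inv]
  have e4 : x ^ α = x ^ (2 * α) * x ^ (-α) := by
    rw [← rpow_add hx0]; ring_nf
  rw [hinv, e1, e2, e3, e4]
  set y := x ^ (2 * α)
  field_simp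
  linear_combination (1 - α) * hr2

lemma intervalIntegrable_rpow_neg_mul_one_sub_rpow_two_mul (hα : 0 < α) {s : ℝ} (hs0 : 0 < s)
    (hs1 : s ≤ 1) :
    IntervalIntegrable (fun u : ℝ => u ^ (-α) * (1 - u ^ (2 * α)) ^ (-(1 : ℝ) / 2)) volume s 1 := by
  have h := ((intervalIntegrable_iff_integrableOn_Icc_of_le zero_le_one).1
    (intervalIntegrable_rpow_mul_one_sub_rpow_two_mul hα)).mono_set (Icc_subset_Icc hs0.le le_rfl)
  have hcont : ContinuousOn (fun u : ℝ => u ^ (-(2 * α))) (Icc s 1) := fun u hu =>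
    (continuousAt_rpow_const u _ (Or.inl (hs0.trans_le hu.1).ne')).continuousWithinAt
  refine (intervalIntegrable_iff_integrableOn_Icc_of_le hs1).2
    ((h.continuousOn_mul hcont isCompact_Icc).congr_fun (fun u hu => ?_) measurableSet_Icc)
  have hu0 : 0 < u := hs0.trans_le hu.1
  dsimp only
  rw [← mul_assoc, ← rpow_add hu0]
  ring_nf

lemma one_sub_mul_integral_rpow_neg_mul_one_sub_rpow_two_mul (hα : 0 < α) {s : ℝ}
    (hs : s ∈ Ioo (0 : ℝ) 1) :
    (1 - α) * ∫ u in s..1, u ^ (-α) * (1 - u ^ (2 * α)) ^ (-(1 : ℝ) / 2) =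
      (∫ u in s..1, u ^ α * (1 - u ^ (2 * α)) ^ (-(1 : ℝ) / 2)) -
        s ^ (1 - α) * √(1 - s ^ (2 * α)) := by
  have hI1 := intervalIntegrable_rpow_neg_mul_one_sub_rpow_two_mul hα hs.1 hs.2.le
  have hI2 := (intervalIntegrable_rpow_mul_one_sub_rpow_two_mul hα).mono_set
    (by rw [uIcc_of_le hs.2.le, uIcc_of_le zero_le_one]; exact Icc_subset_Icc hs.1.le le_rfl)
  have hcont : ContinuousOn (fun u : ℝ => u ^ (1 - α) * √(1 - u ^ (2 * α))) (Icc s 1) :=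
    fun u hu => ((continuousAt_rpow_const u _ (Or.inl (hs.1.trans_le hu.1).ne')).mul
      (continuous_const.sub (continuous_rpow_const (by positivity))).sqrt.continuousAt
      ).continuousWithinAt
  have hftc := integral_eq_sub_of_hasDerivAt_of_le hs.2.le hcont
    (fun x hx => hasDerivAt_rpow_one_sub_mul_sqrt hα ⟨hs.1.trans hx.1, hx.2⟩)
    ((hI1.const_mul (1 - α)).sub hI2)
  rw [integral_sub (hI1.const_mul _) hI2, intervalIntegral.integral_const_mul] at hftc
  simp only [one_rpow, sub_self, sqrt_zero, mul_zero, zero_sub] at hftc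
  linarith

lemma tendsto_integral_rpow_mul_one_sub_rpow_two_mul (hα : 0 < α) :
    Tendsto (fun s : ℝ => ∫ u in s..1, u ^ α * (1 - u ^ (2 * α)) ^ (-(1 : ℝ) / 2)) (𝓝[>] 0)
      (𝓝 (√π * Gamma ((1 + α) / (2 * α)) / Gamma (1 / (2 * α)))) := by
  have hint : IntegrableOn (fun u : ℝ => u ^ α * (1 - u ^ (2 * α)) ^ (-(1 : ℝ) / 2))
      (uIcc 0 1) := by
    rw [uIcc_of_le zero_le_one]
    exact (intervalIntegrable_iff_integrableOn_Icc_of_le zero_le_one).1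
      (intervalIntegrable_rpow_mul_one_sub_rpow_two_mul hα)
  rw [← integral_rpow_mul_one_sub_rpow_two_mul hα]
  refine (continuousOn_primitive_interval_left hint 0 left_mem_uIcc).mono_of_mem_nhdsWithin ?_
  rw [uIcc_of_le zero_le_one]
  exact Icc_mem_nhdsGT zero_lt_one

lemma fermi_speed_eq (hα : 0 < α) {s : ℝ} (hs : s ∈ Ioo (0 : ℝ) 1) :
    s ^ (1 - α) * √(1 - s ^ (2 * α)) + (1 - α) * (1 - s ^ (2 * α)) *
        ∫ u in s..1, u ^ (-α) * (1 - u ^ (2 * α)) ^ (-(1 : ℝ) / 2) =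
      s ^ (1 + α) * √(1 - s ^ (2 * α)) +
        (1 - s ^ (2 * α)) * ∫ u in s..1, u ^ α * (1 - u ^ (2 * α)) ^ (-(1 : ℝ) / 2) := by
  have hpow : s ^ (1 + α) = s ^ (1 - α) * s ^ (2 * α) := by
    rw [← rpow_add hs.1]; ring_nf
  rw [mul_comm (1 - α), mul_assoc,
    one_sub_mul_integral_rpow_neg_mul_one_sub_rpow_two_mul hα hs, hpow]
  ring

end FermiSpeed

theorem fermi_speed_limit_general (α : ℝ) (hα : 0 < α) :
    Tendsto (fun s : ℝ =>
        s ^ (1 - α) * Real.sqrt (1 - s ^ (2 * α)) +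
          (1 - α) * (1 - s ^ (2 * α)) *
            ∫ u in s..(1 : ℝ), u ^ (-α) * (1 - u ^ (2 * α)) ^ (-(1 : ℝ) / 2))
      (nhdsWithin 0 (Set.Ioi 0))
      (nhds (Real.sqrt π * Real.Gamma ((1 + α) / (2 * α)) / Real.Gamma (1 / (2 * α)))) := by
  have hpow {q : ℝ} (hq : 0 < q) : Tendsto (fun s : ℝ => s ^ q) (𝓝[>] 0) (𝓝 0) := by
    simpa only [zero_rpow hq.ne'] using
      ((continuous_rpow_const hq.le).tendsto 0).mono_left nhdsWithin_le_nhds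
  have hw : Tendsto (fun s : ℝ => 1 - s ^ (2 * α)) (𝓝[>] 0) (𝓝 1) := by
    simpa using (hpow (by positivity : 0 < 2 * α)).const_sub 1
  have hlim := ((hpow (by positivity : 0 < 1 + α)).mul hw.sqrt).add
    (hw.mul (tendsto_integral_rpow_mul_one_sub_rpow_two_mul hα))
  rw [zero_mul, zero_add, one_mul] at hlim
  refine hlim.congr' ?_
  filter_upwards [Ioo_mem_nhdsGT zero_lt_one] with s hs
  exact (fermi_speed_eq hα hs).symm

/-- For `α > 0`, `α ≠ 1`, the Fermi relative speed
`φ_α(s) = s^{1-α} √(1 - s^{2α}) + (1-α)(1 - s^{2α}) ∫_s^1 u^{-α} (1 - u^{2α})^{-1/2} du`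
tends to `C_α = √π Γ((1+α)/(2α)) / Γ(1/(2α))` as `s → 0⁺`. -/
theorem fermi_speed_limit (α : ℝ) (hα : 0 < α) (hα1 : α ≠ 1) :
    Tendsto (fun s : ℝ =>
        s ^ (1 - α) * Real.sqrt (1 - s ^ (2 * α)) +
          (1 - α) * (1 - s ^ (2 * α)) *
            ∫ u in s..(1 : ℝ), u ^ (-α) * (1 - u ^ (2 * α)) ^ (-(1 : ℝ) / 2))
      (nhdsWithin 0 (Set.Ioi 0))
      (nhds (Real.sqrt π * Real.Gamma ((1 + α) / (2 * α)) / Real.Gamma (1 / (2 * α)))) :=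
  fermi_speed_limit_general α hα
end

section
/- Let 0 < α < 1. The function φ_α(s) := s^{1−α}·√(1 − s^{2α}) + (1 − α)·(1 − s^{2α})·∫_s^1 u^{−α}(1 − u^{2α})^{−1/2} du is strictly decreasing on (0, 1). -/
/-!
Differentiating `φ_α`, the terms `±(1 - α) s^(-α) √(1 - s^(2α))` coming from the two products
cancel, leaving `φ_α'(s) = -α s^α / √(1 - s^(2α)) - 2α(1 - α) s^(2α-1) ∫_s^1 u^(-α) (1 - u^(2α))^(-1/2) du`,
which is negative because the integrand is nonnegative. Differentiating the integral in its lower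
limit needs integrability up to `u = 1`: by Bernoulli's inequality `α (1 - u) ≤ 1 - u^(2α)`, so the
integrand is bounded there by a multiple of `(1 - u)^(-1/2)`.
-/

open Real MeasureTheory intervalIntegral Set

noncomputable def fermiIntegrand (α u : ℝ) : ℝ := u ^ (-α) * (1 - u ^ (2 * α)) ^ (-(1 : ℝ) / 2)

noncomputable def fermiSpeed (α s : ℝ) : ℝ :=
  s ^ (1 - α) * √(1 - s ^ (2 * α)) + (1 - α) * (1 - s ^ (2 * α)) * ∫ u in s..1, fermiIntegrand α u

section

variable {α s u : ℝ}

lemma mul_one_sub_le_one_sub_rpow_two_mul (hα0 : 0 ≤ α) (hα1 : α ≤ 1) (hu0 : 0 ≤ u)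
    (hu1 : u ≤ 1) : α * (1 - u) ≤ 1 - u ^ (2 * α) := by
  have bernoulli : u ^ α ≤ 1 + α * (u - 1) := by
    simpa using rpow_one_add_le_one_add_mul_self (s := u - 1) (by linarith) hα0 hα1
  have hmono : u ^ (2 * α) ≤ u ^ α := rpow_le_rpow_of_exponent_ge' hu0 hu1 hα0 (by linarith)
  linarith

lemma fermiIntegrand_nonneg (hα : 0 ≤ α) (hu0 : 0 ≤ u) (hu1 : u ≤ 1) :
    0 ≤ fermiIntegrand α u :=
  mul_nonneg (rpow_nonneg hu0 _)
    (rpow_nonneg (sub_nonneg.2 (rpow_le_one hu0 hu1 (by positivity))) _)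

lemma fermiIntegrand_le (hα0 : 0 < α) (hα1 : α ≤ 1) (hs : 0 < s) (hsu : s ≤ u) (hu : u < 1) :
    fermiIntegrand α u ≤ s ^ (-α) * α ^ (-(1 : ℝ) / 2) * (1 - u) ^ (-(1 : ℝ) / 2) := by
  rw [mul_assoc, ← mul_rpow hα0.le (by linarith)]
  exact mul_le_mul (rpow_le_rpow_of_nonpos hs hsu (by linarith))
    (rpow_le_rpow_of_nonpos (mul_pos hα0 (by linarith))
      (mul_one_sub_le_one_sub_rpow_two_mul hα0.le hα1 (by linarith) hu.le) (by norm_num))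
    (rpow_nonneg (by linarith [rpow_le_one (hs.le.trans hsu) hu.le (by positivity : 0 ≤ 2 * α)]) _)
    (rpow_nonneg hs.le _)

lemma continuousOn_fermiIntegrand (hα : 0 < α) : ContinuousOn (fermiIntegrand α) (Ioo 0 1) := by
  rintro u ⟨hu0, hu1⟩
  have hq : u ^ (2 * α) < 1 := rpow_lt_one hu0.le hu1 (by positivity)
  apply ContinuousAt.continuousWithinAt
  unfold fermiIntegrand
  fun_prop (disch := first | exact hu0.ne' | exact Or.inl hu0.ne' | exact Or.inl (by linarith))

lemma intervalIntegrable_fermiIntegrand (hα0 : 0 < α) (hα1 : α ≤ 1) (hs0 : 0 < s) (hs1 : s < 1) :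
    IntervalIntegrable (fermiIntegrand α) volume s 1 := by
  have hbound : IntervalIntegrable
      (fun u ↦ s ^ (-α) * α ^ (-(1 : ℝ) / 2) * (1 - u) ^ (-(1 : ℝ) / 2)) volume s 1 := by
    have := (intervalIntegrable_rpow' (r := -(1 : ℝ) / 2) (a := 1 - s) (b := 1 - 1)
      (by norm_num)).comp_sub_left 1
    simpa using this.const_mul (s ^ (-α) * α ^ (-(1 : ℝ) / 2))
  refine hbound.mono_fun' ?_ ?_ <;> rw [uIoc_of_le hs1.le, ← restrict_Ioo_eq_restrict_Ioc]
  · exact ((continuousOn_fermiIntegrand hα0).mono (Ioo_subset_Ioo_left hs0.le)).aestronglyMeasurable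
      measurableSet_Ioo
  · filter_upwards [ae_restrict_mem measurableSet_Ioo] with u ⟨hsu, hu1⟩
    rw [norm_of_nonneg (fermiIntegrand_nonneg hα0.le (hs0.trans hsu).le hu1.le)]
    exact fermiIntegrand_le hα0 hα1 hs0 hsu.le hu1

lemma hasDerivAt_integral_fermiIntegrand (hα0 : 0 < α) (hα1 : α ≤ 1) (hs0 : 0 < s)
    (hs1 : s < 1) :
    HasDerivAt (fun s ↦ ∫ u in s..1, fermiIntegrand α u) (-fermiIntegrand α s) s :=
  integral_hasDerivAt_left (intervalIntegrable_fermiIntegrand hα0 hα1 hs0 hs1)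
    ((continuousOn_fermiIntegrand hα0).stronglyMeasurableAtFilter isOpen_Ioo s ⟨hs0, hs1⟩)
    ((continuousOn_fermiIntegrand hα0).continuousAt (Ioo_mem_nhds hs0 hs1))

lemma one_sub_rpow_mul_fermiIntegrand (hs : s ^ (2 * α) < 1) :
    (1 - s ^ (2 * α)) * fermiIntegrand α s = s ^ (-α) * √(1 - s ^ (2 * α)) := by
  have hpos : 0 < 1 - s ^ (2 * α) := by linarith
  rw [fermiIntegrand, sqrt_eq_rpow, mul_left_comm, ← rpow_one_add' hpos.le (by norm_num)]
  norm_num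

lemma hasDerivAt_fermiSpeed (hα0 : 0 < α) (hα1 : α ≤ 1) (hs0 : 0 < s) (hs1 : s < 1) :
    HasDerivAt (fermiSpeed α) (-(α * s ^ α / √(1 - s ^ (2 * α))) -
      2 * α * (1 - α) * s ^ (2 * α - 1) * ∫ u in s..1, fermiIntegrand α u) s := by
  have hq : s ^ (2 * α) < 1 := rpow_lt_one hs0.le hs1 (by positivity)
  have hpow : HasDerivAt (fun s ↦ s ^ (1 - α)) ((1 - α) * s ^ (-α)) s := by
    simpa using hasDerivAt_rpow_const (x := s) (p := 1 - α) (Or.inl hs0.ne')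
  have hgap : HasDerivAt (fun s ↦ 1 - s ^ (2 * α)) (-(2 * α * s ^ (2 * α - 1))) s := by
    simpa using (hasDerivAt_rpow_const (x := s) (p := 2 * α) (Or.inl hs0.ne')).const_sub 1
  have hsum := (hpow.mul (hgap.sqrt (by linarith))).add
    ((hgap.const_mul (1 - α)).mul (hasDerivAt_integral_fermiIntegrand hα0 hα1 hs0 hs1))
  refine hsum.congr_deriv ?_
  have hcancel := one_sub_rpow_mul_fermiIntegrand hq
  have hexp : s ^ (1 - α) * s ^ (2 * α - 1) = s ^ α := by
    rw [← rpow_add hs0]; ring_nf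
  linear_combination (α - 1) * hcancel - α / √(1 - s ^ (2 * α)) * hexp

end

/-- For `0 < α < 1`, the Fermi relative speed
`φ_α(s) = s^{1-α} √(1 - s^{2α}) + (1-α)(1 - s^{2α}) ∫_s^1 u^{-α} (1 - u^{2α})^{-1/2} du`
is strictly decreasing on `(0, 1)` (Fermi speeds increase with proper distance). -/
theorem fermi_speed_strictAnti (α : ℝ) (hα0 : 0 < α) (hα1 : α < 1) :
    StrictAntiOn (fun s : ℝ =>
        s ^ (1 - α) * Real.sqrt (1 - s ^ (2 * α)) +
          (1 - α) * (1 - s ^ (2 * α)) *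
            ∫ u in s..(1 : ℝ), u ^ (-α) * (1 - u ^ (2 * α)) ^ (-(1 : ℝ) / 2))
      (Set.Ioo 0 1) := by
  show StrictAntiOn (fermiSpeed α) (Ioo 0 1)
  have hderiv {s : ℝ} (hs : s ∈ Ioo 0 1) := hasDerivAt_fermiSpeed hα0 hα1.le hs.1 hs.2
  refine strictAntiOn_of_hasDerivWithinAt_neg (convex_Ioo 0 1)
    (fun s hs ↦ (hderiv hs).continuousAt.continuousWithinAt)
    (fun s hs ↦ (hderiv (interior_subset hs)).hasDerivWithinAt) ?_
  rw [interior_Ioo]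
  rintro s ⟨hs0, hs1⟩
  have hgap : 0 < 1 - s ^ (2 * α) := sub_pos.2 (rpow_lt_one hs0.le hs1 (by positivity))
  have hint : 0 ≤ ∫ u in s..1, fermiIntegrand α u :=
    integral_nonneg hs1.le fun u hu ↦ fermiIntegrand_nonneg hα0.le (hs0.le.trans hu.1) hu.2
  have hcoeff : 0 ≤ 1 - α := sub_nonneg.2 hα1.le
  have hmain : 0 < α * s ^ α / √(1 - s ^ (2 * α)) := by positivity
  have hrest : 0 ≤ 2 * α * (1 - α) * s ^ (2 * α - 1) * ∫ u in s..1, fermiIntegrand α u := by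
    positivity
  linarith
end

section
/- Let 0 < α < 1. There exists s ∈ (0, 1) such that φ_α(s) := s^{1−α}·√(1 − s^{2α}) + (1 − α)·(1 − s^{2α})·∫_s^1 u^{−α}(1 − u^{2α})^{−1/2} du > 1. -/
set_option maxHeartbeats 1000000

open Real MeasureTheory intervalIntegral Set

theorem aux_sqrt_inv (x : ℝ) (hx0 : 0 ≤ x) (hx1 : x < 1) : 1 + x/2 ≤ (1-x) ^ (-(1:ℝ)/2) := by
  have h1 : (0:ℝ) < 1 - x := by linarith
  have hy : Real.sqrt (1-x) > 0 := Real.sqrt_pos.2 h1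
  have hy2 : Real.sqrt (1-x) ^ 2 = 1 - x := Real.sq_sqrt h1.le
  have heq : (1-x) ^ (-(1:ℝ)/2) = (Real.sqrt (1-x))⁻¹ := by
    rw [show (-(1:ℝ)/2) = -(1/2) by ring, Real.rpow_neg h1.le, ← Real.sqrt_eq_rpow]
  have key : ((1 + x/2) * Real.sqrt (1-x))^2 ≤ 1 := by
    have : ((1 + x/2) * Real.sqrt (1-x))^2 = (1 + x/2)^2 * (1-x) := by
      rw [mul_pow, hy2]
    rw [this]
    nlinarith [sq_nonneg x, mul_nonneg (mul_nonneg hx0 hx0) hx0]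
  have h2 : (1 + x/2) * Real.sqrt (1-x) ≤ 1 := by
    nlinarith [sq_nonneg ((1 + x/2) * Real.sqrt (1-x) - 1), mul_pos (show (0:ℝ) < 1 + x/2 by linarith) hy]
  rw [heq, inv_eq_one_div, le_div_iff₀ hy]
  exact h2


theorem aux_one_sub_rpow (α u : ℝ) (hα0 : 0 < α) (hu0 : 0 ≤ u) (hu1 : u ≤ 1) :
    min (2*α) 1 * (1-u) ≤ 1 - u^(2*α) := by
  rcases le_or_gt (2*α) 1 with h | h
  · rw [min_eq_left h]
    have hb := rpow_one_add_le_one_add_mul_self (s := u - 1) (by linarith)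
      (by linarith : (0:ℝ) ≤ 2*α) h
    rw [show (1 + (u-1)) = u by ring] at hb
    linarith
  · rw [min_eq_right h.le]
    rcases eq_or_lt_of_le hu0 with h0 | h0
    · rw [← h0, Real.zero_rpow (by positivity)]; linarith
    · have := Real.rpow_le_rpow_of_exponent_ge h0 hu1 (show (1:ℝ) ≤ 2*α by linarith)
      rw [Real.rpow_one] at this
      linarith

theorem aux_integrable (α s : ℝ) (hα0 : 0 < α) (hα1 : α < 1) (hs0 : 0 < s) (hs1 : s < 1) :
    IntervalIntegrable (fun u : ℝ => u^(-α) * (1 - u^(2*α))^(-(1:ℝ)/2)) volume s 1 := by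
  set K : ℝ := min (2*α) 1 with hKdef
  have hK : 0 < K := lt_min (by linarith) one_pos
  have hg : IntervalIntegrable
      (fun u : ℝ => s^(-α) * K^(-(1:ℝ)/2) * (1-u) ^ (-(1:ℝ)/2)) volume s 1 := by
    have h0 : IntervalIntegrable (fun x : ℝ => x ^ (-(1:ℝ)/2)) volume 0 (1-s) :=
      intervalIntegral.intervalIntegrable_rpow' (by norm_num)
    have h1 : IntervalIntegrable (fun x : ℝ => (1 - x) ^ (-(1:ℝ)/2)) volume (1 - 0) (1 - (1-s)) :=
      h0.comp_sub_left 1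
    rw [sub_zero, sub_sub_cancel] at h1
    exact h1.symm.const_mul _
  refine hg.mono_fun ?_ ?_
  · exact (by fun_prop : Measurable
      (fun u : ℝ => u^(-α) * (1 - u^(2*α))^(-(1:ℝ)/2))).aestronglyMeasurable
  · filter_upwards [ae_restrict_mem measurableSet_uIoc] with u hu
    rw [Set.uIoc_of_le hs1.le] at hu
    obtain ⟨hsu, hu1⟩ := hu
    have hu0 : 0 < u := hs0.trans hsu
    have hpow1 : u ^ (2*α) ≤ 1 := Real.rpow_le_one hu0.le hu1 (by linarith)
    have hf_nonneg : 0 ≤ u^(-α) * (1 - u^(2*α))^(-(1:ℝ)/2) :=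
      mul_nonneg (Real.rpow_nonneg hu0.le _) (Real.rpow_nonneg (by linarith) _)
    rw [Real.norm_eq_abs, abs_of_nonneg hf_nonneg]
    refine le_trans ?_ (le_abs_self _)
    rcases eq_or_lt_of_le hu1 with rfl | hu1'
    · simp [Real.one_rpow, sub_self, Real.zero_rpow (show (-(1:ℝ)/2) ≠ 0 by norm_num)]
    · have hK1u : 0 < K * (1-u) := mul_pos hK (by linarith)
      have hle : K * (1-u) ≤ 1 - u^(2*α) := aux_one_sub_rpow α u hα0 hu0.le hu1'.le
      have h2 : (1 - u^(2*α)) ^ (-(1:ℝ)/2) ≤ (K * (1-u)) ^ (-(1:ℝ)/2) :=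
        Real.rpow_le_rpow_of_nonpos hK1u hle (by norm_num)
      have h3 : (K * (1-u)) ^ (-(1:ℝ)/2) = K^(-(1:ℝ)/2) * (1-u)^(-(1:ℝ)/2) :=
        Real.mul_rpow hK.le (by linarith)
      have h4 : u^(-α) ≤ s^(-α) :=
        Real.rpow_le_rpow_of_nonpos hs0 hsu.le (by linarith)
      calc u^(-α) * (1 - u^(2*α))^(-(1:ℝ)/2)
          ≤ s^(-α) * ((K * (1-u)) ^ (-(1:ℝ)/2)) := by
            apply mul_le_mul h4 h2 (Real.rpow_nonneg (by linarith) _) (Real.rpow_nonneg hs0.le _)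
        _ = s^(-α) * K^(-(1:ℝ)/2) * (1-u) ^ (-(1:ℝ)/2) := by rw [h3]; ring

/-- For `0 < α < 1`, there exist superluminal recessional Fermi speeds of
comoving particles: some `s ∈ (0,1)` has
`φ_α(s) = s^{1-α} √(1 - s^{2α}) + (1-α)(1 - s^{2α}) ∫_s^1 u^{-α} (1 - u^{2α})^{-1/2} du > 1`. -/
theorem exists_superluminal_fermi (α : ℝ) (hα0 : 0 < α) (hα1 : α < 1) :
    ∃ s ∈ Set.Ioo (0 : ℝ) 1,
      1 < s ^ (1 - α) * Real.sqrt (1 - s ^ (2 * α)) +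
        (1 - α) * (1 - s ^ (2 * α)) *
          ∫ u in s..(1 : ℝ), u ^ (-α) * (1 - u ^ (2 * α)) ^ (-(1 : ℝ) / 2) := by
  have hα1' : (0:ℝ) < 1 - α := by linarith
  have hα2' : (0:ℝ) < 1 + α := by linarith
  set c : ℝ := (1-α)/(2*(1+α)) with hc_def
  have hc0 : 0 < c := by positivity
  have hc2 : c ≤ 1/2 := by
    rw [hc_def, div_le_iff₀ (by positivity)]; linarith
  set ε : ℝ := c/4 with hε_def
  have hε0 : 0 < ε := by positivity
  have hε1 : ε < 1 := by rw [hε_def]; linarith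
  set s : ℝ := min (ε ^ ((2*α)⁻¹)) (min (ε ^ ((1-α)⁻¹)) (ε ^ ((1+α)⁻¹))) with hs_def
  have hs0 : 0 < s :=
    lt_min (Real.rpow_pos_of_pos hε0 _) (lt_min (Real.rpow_pos_of_pos hε0 _) (Real.rpow_pos_of_pos hε0 _))
  have hs1 : s < 1 :=
    lt_of_le_of_lt (min_le_left _ _) (Real.rpow_lt_one hε0.le hε1 (by positivity))
  have pow_le : ∀ β : ℝ, 0 < β → s ≤ ε ^ β⁻¹ → s ^ β ≤ ε := by
    intro β hβ hsβ
    calc s ^ β ≤ (ε ^ β⁻¹) ^ β := Real.rpow_le_rpow hs0.le hsβ hβ.le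
      _ = ε := by rw [← Real.rpow_mul hε0.le, inv_mul_cancel₀ hβ.ne', Real.rpow_one]
  have hd : s ^ (2*α) ≤ ε := pow_le _ (by linarith) (min_le_left _ _)
  have he : s ^ (1-α) ≤ ε := pow_le _ hα1' ((min_le_right _ _).trans (min_le_left _ _))
  have hf : s ^ (1+α) ≤ ε := pow_le _ hα2' ((min_le_right _ _).trans (min_le_right _ _))
  have hd0 : 0 < s ^ (2*α) := Real.rpow_pos_of_pos hs0 _
  have he0 : 0 < s ^ (1-α) := Real.rpow_pos_of_pos hs0 _
  have hf0 : 0 < s ^ (1+α) := Real.rpow_pos_of_pos hs0 _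
  have hd1 : s ^ (2*α) < 1 := Real.rpow_lt_one hs0.le hs1 (by linarith)
  -- integrability of the lower bound
  have hlow_int : IntervalIntegrable (fun u : ℝ => u^(-α) + u^α/2) volume s 1 :=
    (intervalIntegral.intervalIntegrable_rpow' (by linarith)).add
      ((intervalIntegral.intervalIntegrable_rpow' (by linarith)).div_const 2)
  -- monotonicity
  have hmono : (∫ u in s..(1:ℝ), (u^(-α) + u^α/2)) ≤
      ∫ u in s..(1:ℝ), u ^ (-α) * (1 - u ^ (2 * α)) ^ (-(1 : ℝ) / 2) := by
    refine intervalIntegral.integral_mono_ae_restrict hs1.le hlow_int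
      (aux_integrable α s hα0 hα1 hs0 hs1) ?_
    have hne : ∀ᵐ u ∂(volume.restrict (Icc s 1)), u ≠ (1:ℝ) := by
      refine ae_restrict_of_ae ?_
      rw [ae_iff]
      have : {x : ℝ | ¬ x ≠ 1} = {1} := by ext x; simp
      rw [this]
      exact measure_singleton 1
    filter_upwards [hne, ae_restrict_mem measurableSet_Icc] with u hune hu
    have hu0 : 0 < u := lt_of_lt_of_le hs0 hu.1
    have hu1 : u < 1 := lt_of_le_of_ne hu.2 hune
    have hx := aux_sqrt_inv (u^(2*α)) (Real.rpow_nonneg hu0.le _)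
      (Real.rpow_lt_one hu0.le hu1 (by linarith))
    have h5 : u^(-α) * u^(2*α) = u^α := by
      rw [← Real.rpow_add hu0, show -α + 2*α = α by ring]
    calc u^(-α) + u^α/2 = u^(-α) * (1 + u^(2*α)/2) := by rw [← h5]; ring
      _ ≤ u^(-α) * ((1 - u^(2*α)) ^ (-(1:ℝ)/2)) :=
        mul_le_mul_of_nonneg_left hx (Real.rpow_nonneg hu0.le _)
  -- value of the lower integral
  have hval : (∫ u in s..(1:ℝ), (u^(-α) + u^α/2)) =
      (1 - s^(1-α))/(1-α) + (1 - s^(1+α))/(2*(1+α)) := by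
    rw [intervalIntegral.integral_add (intervalIntegral.intervalIntegrable_rpow' (by linarith))
      ((intervalIntegral.intervalIntegrable_rpow' (by linarith)).div_const 2)]
    rw [intervalIntegral.integral_div]
    rw [integral_rpow (Or.inl (by linarith : (-1:ℝ) < -α)),
        integral_rpow (Or.inl (by linarith : (-1:ℝ) < α))]
    rw [Real.one_rpow, Real.one_rpow, show -α + 1 = 1 - α by ring, show α + 1 = 1 + α by ring]
    field_simp
  refine ⟨s, ⟨hs0, hs1⟩, ?_⟩
  have hA : 0 ≤ s ^ (1 - α) * Real.sqrt (1 - s ^ (2 * α)) := by positivity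
  have hfac : (0:ℝ) ≤ (1-α) * (1 - s^(2*α)) := by nlinarith
  have hchain : (1-α) * (1 - s^(2*α)) * ((1 - s^(1-α))/(1-α) + (1 - s^(1+α))/(2*(1+α))) ≤
      (1-α) * (1 - s^(2*α)) * ∫ u in s..(1:ℝ), u ^ (-α) * (1 - u ^ (2 * α)) ^ (-(1 : ℝ) / 2) := by
    rw [← hval] at *
    exact mul_le_mul_of_nonneg_left hmono hfac
  have hkey : 1 < (1-α) * (1 - s^(2*α)) * ((1 - s^(1-α))/(1-α) + (1 - s^(1+α))/(2*(1+α))) := by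
    have heq : (1-α) * (1 - s^(2*α)) * ((1 - s^(1-α))/(1-α) + (1 - s^(1+α))/(2*(1+α))) =
        (1 - s^(2*α))*(1 - s^(1-α)) + c*(1 - s^(2*α))*(1 - s^(1+α)) := by
      rw [hc_def]; field_simp
    rw [heq]
    have hε_le : ε = c/4 := hε_def
    nlinarith [mul_nonneg hd0.le he0.le, mul_nonneg hd0.le hf0.le, mul_pos hc0 hd0,
      mul_pos hc0 hf0, mul_pos hc0 (mul_pos hd0 hf0), sq_nonneg c]
  linarith
end

section
/- Let α > 0 with α ≠ 1, set w(v) := 1 + ((α−1)/α)·v and V_ast(v) := (1/(1+α))·(1 − w(v)^{(1+α)/(1−α)}) + ((α−1)/α)·v·w(v)^{2α/(1−α)}. If 0 < α < 1, then V_ast(v) → 1/(1+α) as v → (α/(1−α))⁻; if α > 1, then V_ast(v) → 1/(1+α) as v → +∞. -/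
open Real Filter Set

open scoped Topology

/-!
Write `w = 1 + ((α - 1) / α) v`, so that `((α - 1) / α) v = w - 1`, and `e = 2α / (1 - α)`, so that
`(1 + α) / (1 - α) = 1 + e`. Then `V_ast = (1 - w ^ (1 + e)) / (1 + α) + w ^ (1 + e) - w ^ e`.
In both regimes both powers of `w` tend to `0`: for `α < 1` the exponents are positive and
`w → 0⁺`, for `α > 1` they are negative and `w → +∞`.
-/

theorem tendsto_rpow_nhds_zero {p : ℝ} (hp : 0 < p) :
    Tendsto (fun x : ℝ => x ^ p) (𝓝 0) (𝓝 0) := by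
  simpa [zero_rpow hp.ne'] using (continuousAt_rpow_const 0 p (Or.inr hp.le)).tendsto

theorem tendsto_rpow_atTop_nhds_zero {p : ℝ} (hp : p < 0) :
    Tendsto (fun x : ℝ => x ^ p) atTop (𝓝 0) := by
  simpa using tendsto_rpow_neg_atTop (neg_pos.mpr hp)

theorem tendsto_one_add_mul_nhdsLT {c x₀ : ℝ} (hc : c < 0) (hx₀ : 1 + c * x₀ = 0) :
    Tendsto (fun v => 1 + c * v) (𝓝[<] x₀) (𝓝[>] 0) := by
  refine tendsto_nhdsWithin_of_tendsto_nhds_of_eventually_within _ ?_ ?_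
  · have h : Tendsto (fun v => 1 + c * v) (𝓝 x₀) (𝓝 (1 + c * x₀)) :=
      (continuous_const.add (continuous_const_mul c)).tendsto x₀
    rw [hx₀] at h
    exact h.mono_left nhdsWithin_le_nhds
  · filter_upwards [self_mem_nhdsWithin] with v (hv : v < x₀)
    show 0 < 1 + c * v
    nlinarith

theorem one_add_two_mul_div_one_sub {α : ℝ} (hα : α ≠ 1) :
    (1 + α) / (1 - α) = 1 + 2 * α / (1 - α) := by
  have : 1 - α ≠ 0 := sub_ne_zero.mpr hα.symm
  field_simp
  ring

theorem tendsto_mul_one_sub_rpow_add_mul_rpow {ι : Type*} {l : Filter ι} {u : ι → ℝ}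
    {a e E : ℝ} (hE : E = 1 + e) (hpos : ∀ᶠ i in l, 0 < 1 + u i)
    (hE0 : Tendsto (fun i => (1 + u i) ^ E) l (𝓝 0))
    (he0 : Tendsto (fun i => (1 + u i) ^ e) l (𝓝 0)) :
    Tendsto (fun i => a * (1 - (1 + u i) ^ E) + u i * (1 + u i) ^ e) l (𝓝 a) := by
  have hsplit : (fun i => a * (1 - (1 + u i) ^ E) + ((1 + u i) ^ E - (1 + u i) ^ e)) =ᶠ[l]
      fun i => a * (1 - (1 + u i) ^ E) + u i * (1 + u i) ^ e := by
    filter_upwards [hpos] with i hi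
    rw [hE, rpow_add hi, rpow_one]
    ring
  refine Tendsto.congr' hsplit ?_
  simpa using ((tendsto_const_nhds (x := a)).mul ((tendsto_const_nhds (x := (1 : ℝ))).sub hE0)).add
    (hE0.sub he0)

theorem ast_speed_limit_general (α : ℝ) :
    (0 < α ∧ α < 1 →
      Tendsto (fun v : ℝ =>
          (1 / (1 + α)) * (1 - (1 + (α - 1) / α * v) ^ ((1 + α) / (1 - α))) +
            (α - 1) / α * v * (1 + (α - 1) / α * v) ^ (2 * α / (1 - α)))
        (nhdsWithin (α / (1 - α)) (Set.Iio (α / (1 - α)))) (nhds (1 / (1 + α)))) ∧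
    (1 < α →
      Tendsto (fun v : ℝ =>
          (1 / (1 + α)) * (1 - (1 + (α - 1) / α * v) ^ ((1 + α) / (1 - α))) +
            (α - 1) / α * v * (1 + (α - 1) / α * v) ^ (2 * α / (1 - α)))
        atTop (nhds (1 / (1 + α)))) := by
  refine ⟨fun ⟨hα, hα1⟩ => ?_, fun hα1 => ?_⟩
  · have h1α : 0 < 1 - α := by linarith
    have hw : Tendsto (fun v => 1 + (α - 1) / α * v) (𝓝[<] (α / (1 - α))) (𝓝[>] 0) :=
      tendsto_one_add_mul_nhdsLT (div_neg_of_neg_of_pos (by linarith) hα) (by field_simp; ring)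
    have hw0 := hw.mono_right nhdsWithin_le_nhds
    exact tendsto_mul_one_sub_rpow_add_mul_rpow (one_add_two_mul_div_one_sub hα1.ne)
      (hw.eventually eventually_mem_nhdsWithin)
      ((tendsto_rpow_nhds_zero (by positivity)).comp hw0)
      ((tendsto_rpow_nhds_zero (by positivity)).comp hw0)
  · have hw : Tendsto (fun v => 1 + (α - 1) / α * v) atTop atTop :=
      tendsto_atTop_add_const_left _ 1
        (tendsto_id.const_mul_atTop (div_pos (by linarith) (by linarith)))
    exact tendsto_mul_one_sub_rpow_add_mul_rpow (one_add_two_mul_div_one_sub hα1.ne')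
      (hw.eventually_gt_atTop 0)
      ((tendsto_rpow_atTop_nhds_zero (div_neg_of_pos_of_neg (by linarith) (by linarith))).comp hw)
      ((tendsto_rpow_atTop_nhds_zero (div_neg_of_pos_of_neg (by linarith) (by linarith))).comp hw)

/-- With `w(v) = 1 + ((α-1)/α) v` and
`V_ast(v) = (1/(1+α))(1 - w(v)^{(1+α)/(1-α)}) + ((α-1)/α) v w(v)^{2α/(1-α)}`, the astrometric
relative speed of a comoving particle tends to `1/(1+α)` as `v → (α/(1-α))⁻` when `0 < α < 1`,
and as `v → +∞` when `α > 1`. -/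
theorem ast_speed_limit (α : ℝ) (hα : 0 < α) (hα1 : α ≠ 1) :
    (0 < α ∧ α < 1 →
      Tendsto (fun v : ℝ =>
          (1 / (1 + α)) * (1 - (1 + (α - 1) / α * v) ^ ((1 + α) / (1 - α))) +
            (α - 1) / α * v * (1 + (α - 1) / α * v) ^ (2 * α / (1 - α)))
        (nhdsWithin (α / (1 - α)) (Set.Iio (α / (1 - α)))) (nhds (1 / (1 + α)))) ∧
    (1 < α →
      Tendsto (fun v : ℝ =>
          (1 / (1 + α)) * (1 - (1 + (α - 1) / α * v) ^ ((1 + α) / (1 - α))) +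
            (α - 1) / α * v * (1 + (α - 1) / α * v) ^ (2 * α / (1 - α)))
        atTop (nhds (1 / (1 + α)))) :=
  ast_speed_limit_general α
end

section
/- For every σ > 1, σ^{−1/2} · ( 1 + √(σ − 1) · arccos(σ^{−1/2}) ) < π/2, and σ^{−1/2} · ( 1 + √(σ − 1) · arccos(σ^{−1/2}) ) → π/2 as σ → +∞. -/
/-!
Put `x = σ^{-1/2} ∈ (0, 1]` and `θ = arccos x ∈ [0, π/2)`. Since `σ^{-1/2} √(σ - 1) = √(1 - x²)`,
the speed equals `x + √(1 - x²) arccos x = cos θ + θ sin θ`. The map `θ ↦ cos θ + θ sin θ` has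
derivative `θ cos θ > 0` on `(0, π/2)`, so it stays below its value `π/2` at `θ = π/2`; and as
`σ → ∞`, `x → 0`, where the continuous function `x + √(1 - x²) arccos x` takes the value `π/2`.
-/

open Real Filter Topology

lemma strictMonoOn_cos_add_mul_sin :
    StrictMonoOn (fun θ : ℝ => cos θ + θ * sin θ) (Set.Icc 0 (π / 2)) := by
  refine strictMonoOn_of_deriv_pos (convex_Icc _ _) (by fun_prop) fun θ hθ => ?_
  rw [interior_Icc] at hθ
  have hderiv : HasDerivAt (fun θ : ℝ => cos θ + θ * sin θ) (θ * cos θ) θ := by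
    refine ((hasDerivAt_cos θ).add ((hasDerivAt_id' θ).mul (hasDerivAt_sin θ))).congr_deriv ?_
    ring
  rw [hderiv.deriv]
  exact mul_pos hθ.1 (cos_pos_of_mem_Ioo ⟨by linarith [pi_pos, hθ.1], hθ.2⟩)

lemma cos_add_mul_sin_lt_pi_div_two {θ : ℝ} (h0 : 0 ≤ θ) (h1 : θ < π / 2) :
    cos θ + θ * sin θ < π / 2 := by
  simpa using strictMonoOn_cos_add_mul_sin ⟨h0, h1.le⟩ ⟨by positivity, le_rfl⟩ h1

lemma add_sqrt_one_sub_sq_mul_arccos_lt_pi_div_two {x : ℝ} (hx0 : 0 < x) (hx1 : x ≤ 1) :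
    x + √(1 - x ^ 2) * arccos x < π / 2 := by
  have h := cos_add_mul_sin_lt_pi_div_two (arccos_nonneg x) (arccos_lt_pi_div_two.2 hx0)
  rwa [cos_arccos (by linarith) hx1, sin_arccos, mul_comm] at h

lemma rpow_neg_half_mul_sqrt_sub_one {σ : ℝ} (hσ : 0 < σ) :
    σ ^ (-(1 : ℝ) / 2) * √(σ - 1) = √(1 - (σ ^ (-(1 : ℝ) / 2)) ^ 2) := by
  have hsq : (σ ^ (-(1 : ℝ) / 2)) ^ 2 = σ⁻¹ := by
    rw [← rpow_natCast, ← rpow_mul hσ.le]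
    norm_num [rpow_neg_one]
  rw [hsq, ← sqrt_sq (rpow_pos_of_pos hσ _).le, ← sqrt_mul (sq_nonneg _), hsq, inv_mul_eq_div,
    sub_div, div_self hσ.ne', one_div]

lemma rpow_neg_half_mul_one_add_sqrt_mul_arccos {σ : ℝ} (hσ : 0 < σ) :
    σ ^ (-(1 : ℝ) / 2) * (1 + √(σ - 1) * arccos (σ ^ (-(1 : ℝ) / 2))) =
      σ ^ (-(1 : ℝ) / 2) + √(1 - (σ ^ (-(1 : ℝ) / 2)) ^ 2) * arccos (σ ^ (-(1 : ℝ) / 2)) := by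
  rw [← rpow_neg_half_mul_sqrt_sub_one hσ]
  ring

/-- In the radiation-dominated universe, the photon Fermi speed
`√(-g_ττ) = σ^{-1/2} (1 + √(σ-1) arccos(σ^{-1/2}))` is less than `π/2` for every `σ > 1`,
and tends to `π/2` as `σ → +∞`. -/
theorem radiation_fermi_speed_bound :
    (∀ σ : ℝ, 1 < σ →
      σ ^ (-(1 : ℝ) / 2) * (1 + Real.sqrt (σ - 1) * Real.arccos (σ ^ (-(1 : ℝ) / 2))) < π / 2) ∧
    Tendsto (fun σ : ℝ =>
        σ ^ (-(1 : ℝ) / 2) * (1 + Real.sqrt (σ - 1) * Real.arccos (σ ^ (-(1 : ℝ) / 2))))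
      atTop (nhds (π / 2)) := by
  constructor
  · intro σ hσ
    rw [rpow_neg_half_mul_one_add_sqrt_mul_arccos (by linarith)]
    exact add_sqrt_one_sub_sq_mul_arccos_lt_pi_div_two (rpow_pos_of_pos (by linarith) _)
      (rpow_le_one_of_one_le_of_nonpos hσ.le (by norm_num))
  · have hx : Tendsto (fun σ : ℝ => σ ^ (-(1 : ℝ) / 2)) atTop (𝓝 0) := by
      simpa [neg_div] using tendsto_rpow_neg_atTop (y := (1 : ℝ) / 2) (by norm_num)
    have hg : Tendsto (fun x : ℝ => x + √(1 - x ^ 2) * arccos x) (𝓝 0) (𝓝 (π / 2)) := by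
      simpa using (show Continuous (fun x : ℝ => x + √(1 - x ^ 2) * arccos x) by fun_prop).tendsto 0
    refine (hg.comp hx).congr' ?_
    filter_upwards [eventually_gt_atTop 0] with σ hσ
    exact (rpow_neg_half_mul_one_add_sqrt_mul_arccos hσ).symm
end

section
/- Let α > 1. For every σ > 1, ∫_1^{σ} s^{−1/(2α)} (s − 1)^{−1/2} ds < (2α/(α−1)) · σ^{(2α−1)/(2α)} · (σ − 1)^{−1/2}. -/
open Real MeasureTheory intervalIntegral

/-! Since `s ^ (-1/(2α)) ≤ (s - 1) ^ (-1/(2α))` on `(1, σ]`, the integral is bounded by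
`∫₁^σ (s - 1) ^ (-1/2 - 1/(2α)) ds = (2α/(α-1)) (σ - 1) ^ ((α-1)/(2α))`, and writing the exponent
as `(2α-1)/(2α) - 1/2` the strict inequality comes from `(σ - 1) ^ ((2α-1)/(2α)) < σ ^ ((2α-1)/(2α))`. -/

theorem integral_sub_rpow {a b p : ℝ} (hp : -1 < p) :
    ∫ s in a..b, (s - a) ^ p = (b - a) ^ (p + 1) / (p + 1) := by
  rw [integral_comp_sub_right (fun u ↦ u ^ p), sub_self,
    integral_rpow (Or.inl hp), zero_rpow (by linarith), sub_zero]

theorem rpow_neg_mul_sub_one_rpow_le {c q s : ℝ} (hc : 0 ≤ c) (hs : 1 < s) :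
    s ^ (-c) * (s - 1) ^ q ≤ (s - 1) ^ (q - c) := by
  have hs₁ : 0 < s - 1 := by linarith
  calc s ^ (-c) * (s - 1) ^ q ≤ (s - 1) ^ (-c) * (s - 1) ^ q :=
        mul_le_mul_of_nonneg_right (rpow_le_rpow_of_nonpos hs₁ (by linarith) (neg_nonpos.2 hc))
          (rpow_nonneg hs₁.le q)
    _ = (s - 1) ^ (q - c) := by rw [← rpow_add hs₁, neg_add_eq_sub]

theorem integral_rpow_neg_mul_sub_one_rpow_le {c q σ : ℝ} (hc : 0 ≤ c) (hqc : -1 < q - c)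
    (hσ : 1 ≤ σ) :
    ∫ s in (1 : ℝ)..σ, s ^ (-c) * (s - 1) ^ q ≤ (σ - 1) ^ (q - c + 1) / (q - c + 1) := by
  rw [← integral_sub_rpow hqc, integral_of_le hσ, integral_of_le hσ]
  refine integral_mono_of_nonneg ?_ ?_ ?_
  · filter_upwards [ae_restrict_mem measurableSet_Ioc] with s hs
    exact mul_nonneg (rpow_nonneg (by linarith [hs.1]) _) (rpow_nonneg (by linarith [hs.1]) _)
  · have := (intervalIntegrable_rpow' (a := 0) (b := σ - 1) hqc).comp_sub_right 1
    rw [zero_add, sub_add_cancel] at this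
    exact this.1
  · filter_upwards [ae_restrict_mem measurableSet_Ioc] with s hs
    exact rpow_neg_mul_sub_one_rpow_le hc hs.1

/-- For `α > 1` and every `σ > 1`,
`∫_1^σ s^{-1/(2α)} (s-1)^{-1/2} ds < (2α/(α-1)) σ^{(2α-1)/(2α)} (σ-1)^{-1/2}`
(positivity of the Jacobian of the Fermi coordinate transformation). -/
theorem jacobian_positivity_inequality (α σ : ℝ) (hα : 1 < α) (hσ : 1 < σ) :
    (∫ s in (1 : ℝ)..σ, s ^ (-(1 / (2 * α))) * (s - 1) ^ (-(1 : ℝ) / 2))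
      < (2 * α / (α - 1)) * σ ^ ((2 * α - 1) / (2 * α)) * (σ - 1) ^ (-(1 : ℝ) / 2) := by
  have hα₁ : 0 < α - 1 := by linarith
  have hσ₁ : 0 < σ - 1 := by linarith
  have hc : 1 / (2 * α) < 1 / 2 := one_div_lt_one_div_of_lt two_pos (by linarith)
  have hexp : 0 < (2 * α - 1) / (2 * α) := div_pos (by linarith) (by linarith)
  have hsplit : -(1 : ℝ) / 2 - 1 / (2 * α) + 1 = (2 * α - 1) / (2 * α) + -(1 : ℝ) / 2 := by
    field_simp; ring
  have hden : (2 * α - 1) / (2 * α) + -(1 : ℝ) / 2 = (α - 1) / (2 * α) := by field_simp; ring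
  calc _ ≤ (σ - 1) ^ ((2 * α - 1) / (2 * α) + -(1 : ℝ) / 2) / ((α - 1) / (2 * α)) := by
        rw [← hden, ← hsplit]
        exact integral_rpow_neg_mul_sub_one_rpow_le (by positivity) (by linarith) hσ.le
    _ = 2 * α / (α - 1) * (σ - 1) ^ ((2 * α - 1) / (2 * α)) * (σ - 1) ^ (-(1 : ℝ) / 2) := by
        rw [rpow_add hσ₁]
        field_simp
    _ < _ := by gcongr; linarith
end

section
/- Let α > 0 with α ≠ 1. The function I_α(s) := ∫_s^1 u^{−α} (1 − u^{2α})^{−1/2} du is continuous and strictly decreasing on (0, 1); if 0 < α < 1 it maps (0, 1) bijectively onto (0, C_α/(1−α)) where C_α := √π · Γ((1+α)/(2α)) / Γ(1/(2α)), and if α > 1 it maps (0, 1) bijectively onto (0, ∞). -/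
/-!
The integrand `f(u) = u^{-α} (1 - u^{2α})^{-1/2}` is positive and continuous on `(0, 1)`, and
`1 - u^{2α} ≥ min(2α, 1) (1 - u)` makes it integrable at `u = 1`. Hence `I_α(s) = ∫_s^1 f` is
continuous and strictly decreasing with `I_α(1⁻) = 0`, and by the intermediate value theorem it
maps `(0, 1)` onto `(0, I_α(0⁺))`. For `α < 1` the integrand is integrable at `0` as well and the
substitution `t = u^{2α}` turns `I_α(0⁺)` into the Beta integral
`B((1 - α)/(2α), 1/2) / (2α)`; for `α > 1` the bound `f(u) ≥ u^{-α}` forces `I_α(0⁺) = ∞`.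
-/

open Real MeasureTheory intervalIntegral Set Filter Topology

section LowerLimit

variable {f : ℝ → ℝ} {a b : ℝ}

lemma continuousOn_integral_lower_limit (hf : ∀ s ∈ Ioo a b, IntervalIntegrable f volume s b) :
    ContinuousOn (fun s => ∫ u in s..b, f u) (Ioo a b) := by
  intro s hs
  obtain ⟨c, hac, hcs⟩ := exists_between hs.1
  have hcb : c ≤ b := (hcs.trans hs.2).le
  have hcont := continuousOn_primitive_interval_left
    ((intervalIntegrable_iff').mp (hf c ⟨hac, hcs.trans hs.2⟩))
  rw [uIcc_of_le hcb] at hcont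
  exact (hcont.continuousAt (Icc_mem_nhds hcs hs.2)).continuousWithinAt

lemma integral_lower_limit_pos (hf : ∀ s ∈ Ioo a b, IntervalIntegrable f volume s b)
    (hpos : ∀ u ∈ Ioo a b, 0 < f u) {s : ℝ} (hs : s ∈ Ioo a b) : 0 < ∫ u in s..b, f u :=
  intervalIntegral_pos_of_pos_on (hf s hs) (fun u hu => hpos u ⟨hs.1.trans hu.1, hu.2⟩) hs.2

lemma strictAntiOn_integral_lower_limit (hf : ∀ s ∈ Ioo a b, IntervalIntegrable f volume s b)
    (hpos : ∀ u ∈ Ioo a b, 0 < f u) : StrictAntiOn (fun s => ∫ u in s..b, f u) (Ioo a b) := by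
  intro s hs t ht hst
  have hsplit := integral_add_adjacent_intervals ((hf s hs).trans (hf t ht).symm) (hf t ht)
  have hst_pos : 0 < ∫ u in s..t, f u :=
    intervalIntegral_pos_of_pos_on ((hf s hs).trans (hf t ht).symm)
      (fun u hu => hpos u ⟨hs.1.trans hu.1, hu.2.trans ht.2⟩) hst
  simp only
  linarith

lemma tendsto_integral_lower_limit_right (hab : a < b)
    (hf : ∀ s ∈ Ioo a b, IntervalIntegrable f volume s b) :
    Tendsto (fun s => ∫ u in s..b, f u) (𝓝[Ioo a b] b) (𝓝 0) := by
  obtain ⟨c, hac, hcb⟩ := exists_between hab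
  have hcont := continuousOn_primitive_interval_left
    ((intervalIntegrable_iff').mp (hf c ⟨hac, hcb⟩))
  rw [uIcc_of_le hcb.le] at hcont
  have hb := hcont b (right_mem_Icc.mpr hcb.le)
  rw [ContinuousWithinAt, integral_same, nhdsWithin_Icc_eq_nhdsLE hcb] at hb
  rw [nhdsWithin_Ioo_eq_nhdsLT hab]
  exact hb.mono_left (nhdsWithin_mono _ Iio_subset_Iic_self)

lemma tendsto_integral_lower_limit_left (hf : IntervalIntegrable f volume a b) :
    Tendsto (fun s => ∫ u in s..b, f u) (𝓝[Ioo a b] a) (𝓝 (∫ u in a..b, f u)) :=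
  (continuousOn_primitive_interval_left ((intervalIntegrable_iff').mp hf) a left_mem_uIcc).mono_left
    (nhdsWithin_mono _ (Ioo_subset_Icc_self.trans Icc_subset_uIcc))

lemma bijOn_integral_lower_limit_Ioo (hab : a < b) (hf : IntervalIntegrable f volume a b)
    (hpos : ∀ u ∈ Ioo a b, 0 < f u) :
    BijOn (fun s => ∫ u in s..b, f u) (Ioo a b) (Ioo 0 (∫ u in a..b, f u)) := by
  have hf' : ∀ s ∈ Ioo a b, IntervalIntegrable f volume s b := fun s hs =>
    hf.mono_set (uIcc_subset_uIcc_right (Ioo_subset_Icc_self.trans Icc_subset_uIcc hs))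
  have : (𝓝[Ioo a b] b).NeBot := by rw [nhdsWithin_Ioo_eq_nhdsLT hab]; infer_instance
  have : (𝓝[Ioo a b] a).NeBot := by rw [nhdsWithin_Ioo_eq_nhdsGT hab]; infer_instance
  refine ⟨fun s hs => ⟨integral_lower_limit_pos hf' hpos hs, ?_⟩,
    (strictAntiOn_integral_lower_limit hf' hpos).injOn,
    isPreconnected_Ioo.intermediate_value_Ioo (l₁ := 𝓝[Ioo a b] b) (l₂ := 𝓝[Ioo a b] a)
      inf_le_right inf_le_right
      (continuousOn_integral_lower_limit hf') (tendsto_integral_lower_limit_right hab hf')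
      (tendsto_integral_lower_limit_left hf)⟩
  have has : IntervalIntegrable f volume a s :=
    hf.mono_set (uIcc_subset_uIcc_left (Ioo_subset_Icc_self.trans Icc_subset_uIcc hs))
  have hsplit := integral_add_adjacent_intervals has (hf' s hs)
  have has_pos : 0 < ∫ u in a..s, f u :=
    intervalIntegral_pos_of_pos_on has (fun u hu => hpos u ⟨hu.1, hu.2.trans hs.2⟩) hs.1
  simp only
  linarith

lemma bijOn_integral_lower_limit_Ioi (hab : a < b)
    (hf : ∀ s ∈ Ioo a b, IntervalIntegrable f volume s b) (hpos : ∀ u ∈ Ioo a b, 0 < f u)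
    (htop : Tendsto (fun s => ∫ u in s..b, f u) (𝓝[Ioo a b] a) atTop) :
    BijOn (fun s => ∫ u in s..b, f u) (Ioo a b) (Ioi 0) := by
  have : (𝓝[Ioo a b] b).NeBot := by rw [nhdsWithin_Ioo_eq_nhdsLT hab]; infer_instance
  have : (𝓝[Ioo a b] a).NeBot := by rw [nhdsWithin_Ioo_eq_nhdsGT hab]; infer_instance
  exact ⟨fun s hs => integral_lower_limit_pos hf hpos hs,
    (strictAntiOn_integral_lower_limit hf hpos).injOn,
    isPreconnected_Ioo.intermediate_value_Ioi (l₁ := 𝓝[Ioo a b] b) (l₂ := 𝓝[Ioo a b] a)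
      inf_le_right inf_le_right
      (continuousOn_integral_lower_limit hf) (tendsto_integral_lower_limit_right hab hf) htop⟩

end LowerLimit

lemma mul_one_sub_le_one_sub_rpow {β u : ℝ} (hβ : 0 < β) (hu0 : 0 ≤ u) (hu1 : u ≤ 1) :
    min β 1 * (1 - u) ≤ 1 - u ^ β := by
  rcases le_total β 1 with hβ1 | hβ1
  · have hbern := rpow_one_add_le_one_add_mul_self (s := u - 1) (by linarith) hβ.le hβ1
    rw [add_sub_cancel] at hbern
    rw [min_eq_left hβ1]
    linarith
  · have hle : u ^ β ≤ u := by
      simpa using rpow_le_rpow_of_exponent_ge' hu0 hu1 zero_le_one hβ1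
    rw [min_eq_right hβ1]
    linarith

lemma integral_comp_rpow_Ioo_zero_one (g : ℝ → ℝ) {p : ℝ} (hp : 0 < p) :
    ∫ x in Ioo 0 1, (p * x ^ (p - 1)) * g (x ^ p) = ∫ y in Ioo 0 1, g y := by
  have himage : (fun x : ℝ => x ^ p) '' Ioo 0 1 = Ioo 0 1 := by
    refine Subset.antisymm ?_ fun y hy => ⟨y ^ p⁻¹, ?_, rpow_inv_rpow hy.1.le hp.ne'⟩
    · rintro _ ⟨x, hx, rfl⟩
      exact ⟨rpow_pos_of_pos hx.1 p, rpow_lt_one hx.1.le hx.2 hp⟩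
    · exact ⟨rpow_pos_of_pos hy.1 _, rpow_lt_one hy.1.le hy.2 (inv_pos.mpr hp)⟩
  have hderiv : ∀ x ∈ Ioo (0 : ℝ) 1,
      HasDerivWithinAt (fun x : ℝ => x ^ p) (p * x ^ (p - 1)) (Ioo 0 1) x := fun x hx =>
    (hasDerivAt_rpow_const (Or.inl hx.1.ne')).hasDerivWithinAt
  have hinj : InjOn (fun x : ℝ => x ^ p) (Ioo 0 1) := fun x hx y hy hxy =>
    rpow_left_injOn hp.ne' hx.1.le hy.1.le hxy
  have hcov := integral_image_eq_integral_abs_deriv_smul measurableSet_Ioo hderiv hinj g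
  rw [himage] at hcov
  rw [hcov]
  refine setIntegral_congr_fun measurableSet_Ioo fun x hx => ?_
  rw [smul_eq_mul, abs_of_pos (mul_pos hp (rpow_pos_of_pos hx.1 _))]

lemma integral_rpow_mul_one_sub_rpow_s19 {u v : ℝ} (hu : 0 < u) (hv : 0 < v) :
    ∫ t in (0 : ℝ)..1, t ^ (u - 1) * (1 - t) ^ (v - 1) = Gamma u * Gamma v / Gamma (u + v) := by
  have hbeta := Complex.Gamma_mul_Gamma_eq_betaIntegral (s := u) (t := v)
    (by simpa using hu) (by simpa using hv)
  have hreal : Complex.betaIntegral u v =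
      ((∫ t in (0 : ℝ)..1, t ^ (u - 1) * (1 - t) ^ (v - 1) : ℝ) : ℂ) := by
    rw [Complex.betaIntegral, ← intervalIntegral.integral_ofReal]
    refine integral_congr fun t ht => ?_
    rw [uIcc_of_le zero_le_one] at ht
    push_cast
    rw [Complex.ofReal_cpow ht.1, Complex.ofReal_cpow (by linarith [ht.2])]
    push_cast
    ring
  rw [hreal, ← Complex.ofReal_add, Complex.Gamma_ofReal, Complex.Gamma_ofReal,
    Complex.Gamma_ofReal] at hbeta
  have hΓ : Gamma (u + v) ≠ 0 := (Gamma_pos_of_pos (add_pos hu hv)).ne'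
  rw [eq_div_iff hΓ, mul_comm]
  exact_mod_cast hbeta.symm

namespace IAlpha

noncomputable def integrand (α u : ℝ) : ℝ := u ^ (-α) * (1 - u ^ (2 * α)) ^ (-(1 : ℝ) / 2)

variable {α : ℝ}

lemma measurable_integrand : Measurable (integrand α) := by
  unfold integrand; fun_prop

lemma integrand_pos (hα : 0 < α) {u : ℝ} (hu : u ∈ Ioo 0 1) : 0 < integrand α u := by
  have : u ^ (2 * α) < 1 := rpow_lt_one hu.1.le hu.2 (by positivity)
  exact mul_pos (rpow_pos_of_pos hu.1 _) (rpow_pos_of_pos (by linarith) _)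

lemma integrand_one : integrand α 1 = 0 := by
  simp [integrand, zero_rpow (by norm_num : -(1 : ℝ) / 2 ≠ 0)]

lemma rpow_neg_le_integrand (hα : 0 < α) {u : ℝ} (hu : u ∈ Ioo 0 1) :
    u ^ (-α) ≤ integrand α u := by
  have h1 : u ^ (2 * α) < 1 := rpow_lt_one hu.1.le hu.2 (by positivity)
  have h0 : 0 ≤ u ^ (2 * α) := rpow_nonneg hu.1.le _
  exact le_mul_of_one_le_right (rpow_nonneg hu.1.le _)
    (one_le_rpow_of_pos_of_le_one_of_nonpos (by linarith) (by linarith) (by norm_num))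

lemma integrand_le_mul_one_sub_rpow (hα : 0 < α) {s u : ℝ} (hs : 0 < s) (hu : u ∈ Ioo s 1) :
    integrand α u ≤ s ^ (-α) * min (2 * α) 1 ^ (-(1 : ℝ) / 2) * (1 - u) ^ (-(1 : ℝ) / 2) := by
  have hu0 : 0 < u := hs.trans hu.1
  have hm : 0 < min (2 * α) 1 := lt_min (by positivity) one_pos
  have hmu : 0 < min (2 * α) 1 * (1 - u) := mul_pos hm (by linarith [hu.2])
  have hlow := mul_one_sub_le_one_sub_rpow (by positivity : 0 < 2 * α) hu0.le hu.2.le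
  rw [integrand, mul_assoc, ← mul_rpow hm.le (by linarith [hu.2])]
  exact mul_le_mul (rpow_le_rpow_of_nonpos hs hu.1.le (by linarith))
    (rpow_le_rpow_of_nonpos hmu hlow (by norm_num)) (rpow_nonneg (hmu.le.trans hlow) _)
    (rpow_nonneg hs.le _)

lemma intervalIntegrable_integrand (hα : 0 < α) {s : ℝ} (hs : 0 < s) (hs1 : s ≤ 1) :
    IntervalIntegrable (integrand α) volume s 1 := by
  have hdom : IntervalIntegrable
      (fun u => s ^ (-α) * min (2 * α) 1 ^ (-(1 : ℝ) / 2) * (1 - u) ^ (-(1 : ℝ) / 2))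
      volume s 1 := by
    have h := (intervalIntegrable_rpow' (a := 0) (b := 1 - s)
      (by norm_num : -1 < -(1 : ℝ) / 2)).comp_sub_left 1
    rw [sub_zero, sub_sub_cancel] at h
    exact h.symm.const_mul _
  refine hdom.mono_fun' measurable_integrand.aestronglyMeasurable
    (ae_restrict_of_forall_mem measurableSet_uIoc fun u hu => ?_)
  rw [uIoc_of_le hs1] at hu
  dsimp only
  rcases hu.2.lt_or_eq with hu1 | rfl
  · rw [norm_of_nonneg (integrand_pos hα ⟨hs.trans hu.1, hu1⟩).le]
    exact integrand_le_mul_one_sub_rpow hα hs ⟨hu.1, hu1⟩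
  · -- `0 ^ (-1/2) = 0` in Lean, so both sides vanish at `u = 1`
    simp [integrand_one, zero_rpow (by norm_num : -(1 : ℝ) / 2 ≠ 0)]

lemma integrand_le_rpow_neg_mul (hα : 0 < α) {s u : ℝ} (hs : s < 1) (hu : u ∈ Ioc 0 s) :
    integrand α u ≤ u ^ (-α) * (1 - s ^ (2 * α)) ^ (-(1 : ℝ) / 2) := by
  have hs1 : s ^ (2 * α) < 1 := rpow_lt_one (hu.1.le.trans hu.2) hs (by positivity)
  have hus : u ^ (2 * α) ≤ s ^ (2 * α) := rpow_le_rpow hu.1.le hu.2 (by positivity)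
  exact mul_le_mul_of_nonneg_left
    (rpow_le_rpow_of_nonpos (by linarith) (by linarith) (by norm_num)) (rpow_nonneg hu.1.le _)

lemma intervalIntegrable_integrand_zero_one (hα : 0 < α) (hα1 : α < 1) :
    IntervalIntegrable (integrand α) volume 0 1 := by
  have hdom : IntervalIntegrable
      (fun u : ℝ => u ^ (-α) * (1 - (1 / 2 : ℝ) ^ (2 * α)) ^ (-(1 : ℝ) / 2)) volume 0 (1 / 2) :=
    (intervalIntegrable_rpow' (by linarith)).mul_const _
  refine IntervalIntegrable.trans (b := 1 / 2) ?_
    (intervalIntegrable_integrand hα (by norm_num) (by norm_num))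
  refine hdom.mono_fun' measurable_integrand.aestronglyMeasurable
    (ae_restrict_of_forall_mem measurableSet_uIoc fun u hu => ?_)
  rw [uIoc_of_le (by norm_num)] at hu
  dsimp only
  rw [norm_of_nonneg (integrand_pos hα ⟨hu.1, hu.2.trans_lt (by norm_num)⟩).le]
  exact integrand_le_rpow_neg_mul hα (by norm_num) hu

lemma integral_integrand_zero_one (hα : 0 < α) (hα1 : α < 1) :
    ∫ u in (0 : ℝ)..1, integrand α u =
      (√π * Gamma ((1 + α) / (2 * α)) / Gamma (1 / (2 * α))) / (1 - α) := by
  set b := (1 - α) / (2 * α) with hb_def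
  have hb : 0 < b := div_pos (by linarith) (by positivity)
  have hbeta := integral_rpow_mul_one_sub_rpow_s19 hb (by norm_num : (0 : ℝ) < 1 / 2)
  rw [integral_of_le zero_le_one, integral_Ioc_eq_integral_Ioo,
    ← integral_comp_rpow_Ioo_zero_one _ (by positivity : 0 < 2 * α)] at hbeta
  have hcov : ∀ x ∈ Ioo (0 : ℝ) 1,
      2 * α * x ^ (2 * α - 1) * ((x ^ (2 * α)) ^ (b - 1) * (1 - x ^ (2 * α)) ^ (1 / 2 - 1 : ℝ)) =
        2 * α * integrand α x := by
    intro x hx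
    rw [← rpow_mul hx.1.le, integrand, mul_assoc, ← mul_assoc (x ^ (2 * α - 1)), ← rpow_add hx.1,
      show 2 * α - 1 + 2 * α * (b - 1) = -α by rw [hb_def]; field_simp; ring]
    norm_num
  rw [setIntegral_congr_fun measurableSet_Ioo hcov, MeasureTheory.integral_const_mul,
    ← integral_Ioc_eq_integral_Ioo, ← integral_of_le zero_le_one, Gamma_one_half_eq,
    show b + 1 / 2 = 1 / (2 * α) by rw [hb_def]; field_simp; ring] at hbeta
  have hΓ : Gamma ((1 + α) / (2 * α)) = b * Gamma b := by
    rw [← Gamma_add_one hb.ne', hb_def]; congr 1; field_simp; ring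
  have h1α : 1 - α ≠ 0 := by linarith
  rw [eq_div_iff h1α, hΓ, ← mul_right_inj' (by positivity : 2 * α ≠ 0), ← mul_assoc, hbeta,
    hb_def]
  field_simp

lemma tendsto_integral_integrand_atTop (hα1 : 1 < α) :
    Tendsto (fun s => ∫ u in s..1, integrand α u) (𝓝[Ioo 0 1] 0) atTop := by
  have hα : 0 < α := by linarith
  have hlow : ∀ s ∈ Ioo (0 : ℝ) 1, (s ^ (1 - α) - 1) / (α - 1) ≤ ∫ u in s..1, integrand α u := by
    intro s hs
    have h0 : (0 : ℝ) ∉ uIcc s 1 := by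
      rw [uIcc_of_le hs.2.le]; exact fun h => hs.1.not_ge h.1
    have hval : ∫ u in s..1, u ^ (-α) = (s ^ (1 - α) - 1) / (α - 1) := by
      rw [integral_rpow (Or.inr ⟨by linarith, h0⟩), one_rpow, show -α + 1 = 1 - α by ring,
        ← neg_div_neg_eq, neg_sub, neg_sub]
    rw [← hval]
    exact integral_mono_on_of_le_Ioo hs.2.le (intervalIntegrable_rpow (Or.inr h0))
      (intervalIntegrable_integrand hα hs.1 hs.2.le) fun u hu =>
        rpow_neg_le_integrand hα ⟨hs.1.trans hu.1, hu.2⟩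
  refine tendsto_atTop_mono' _ (eventually_nhdsWithin_of_forall hlow) ?_
  rw [nhdsWithin_Ioo_eq_nhdsGT one_pos]
  simpa only [sub_eq_add_neg] using (tendsto_atTop_add_const_right _ (-1)
    (tendsto_rpow_neg_nhdsGT_zero (by linarith))).atTop_div_const (by linarith : (0 : ℝ) < α - 1)

end IAlpha

theorem I_alpha_properties_general (α : ℝ) (hα : 0 < α) :
    ContinuousOn (fun s : ℝ =>
        ∫ u in s..(1 : ℝ), u ^ (-α) * (1 - u ^ (2 * α)) ^ (-(1 : ℝ) / 2))
      (Set.Ioo 0 1) ∧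
    StrictAntiOn (fun s : ℝ =>
        ∫ u in s..(1 : ℝ), u ^ (-α) * (1 - u ^ (2 * α)) ^ (-(1 : ℝ) / 2))
      (Set.Ioo 0 1) ∧
    (α < 1 →
      Set.BijOn (fun s : ℝ =>
          ∫ u in s..(1 : ℝ), u ^ (-α) * (1 - u ^ (2 * α)) ^ (-(1 : ℝ) / 2))
        (Set.Ioo 0 1)
        (Set.Ioo 0
          ((Real.sqrt π * Real.Gamma ((1 + α) / (2 * α)) / Real.Gamma (1 / (2 * α)))
            / (1 - α)))) ∧
    (1 < α →
      Set.BijOn (fun s : ℝ =>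
          ∫ u in s..(1 : ℝ), u ^ (-α) * (1 - u ^ (2 * α)) ^ (-(1 : ℝ) / 2))
        (Set.Ioo 0 1) (Set.Ioi 0)) := by
  have hint : ∀ s ∈ Ioo (0 : ℝ) 1, IntervalIntegrable (IAlpha.integrand α) volume s 1 :=
    fun s hs => IAlpha.intervalIntegrable_integrand hα hs.1 hs.2.le
  have hpos : ∀ u ∈ Ioo (0 : ℝ) 1, 0 < IAlpha.integrand α u := fun u hu =>
    IAlpha.integrand_pos hα hu
  refine ⟨continuousOn_integral_lower_limit hint, strictAntiOn_integral_lower_limit hint hpos,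
    fun hα1 => ?_, fun hα1 => ?_⟩
  · rw [← IAlpha.integral_integrand_zero_one hα hα1]
    exact bijOn_integral_lower_limit_Ioo one_pos
      (IAlpha.intervalIntegrable_integrand_zero_one hα hα1) hpos
  · exact bijOn_integral_lower_limit_Ioi one_pos hint hpos
      (IAlpha.tendsto_integral_integrand_atTop hα1)

/-- For `α > 0`, `α ≠ 1`, the function
`I_α(s) = ∫_s^1 u^{-α} (1 - u^{2α})^{-1/2} du` is continuous and strictly decreasing on
`(0,1)`; if `0 < α < 1` it maps `(0,1)` bijectively onto `(0, C_α/(1-α))` with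
`C_α = √π Γ((1+α)/(2α)) / Γ(1/(2α))`, and if `α > 1` it maps `(0,1)` bijectively
onto `(0, ∞)`. -/
theorem I_alpha_properties (α : ℝ) (hα : 0 < α) (hα1 : α ≠ 1) :
    ContinuousOn (fun s : ℝ =>
        ∫ u in s..(1 : ℝ), u ^ (-α) * (1 - u ^ (2 * α)) ^ (-(1 : ℝ) / 2))
      (Set.Ioo 0 1) ∧
    StrictAntiOn (fun s : ℝ =>
        ∫ u in s..(1 : ℝ), u ^ (-α) * (1 - u ^ (2 * α)) ^ (-(1 : ℝ) / 2))
      (Set.Ioo 0 1) ∧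
    (α < 1 →
      Set.BijOn (fun s : ℝ =>
          ∫ u in s..(1 : ℝ), u ^ (-α) * (1 - u ^ (2 * α)) ^ (-(1 : ℝ) / 2))
        (Set.Ioo 0 1)
        (Set.Ioo 0
          ((Real.sqrt π * Real.Gamma ((1 + α) / (2 * α)) / Real.Gamma (1 / (2 * α)))
            / (1 - α)))) ∧
    (1 < α →
      Set.BijOn (fun s : ℝ =>
          ∫ u in s..(1 : ℝ), u ^ (-α) * (1 - u ^ (2 * α)) ^ (-(1 : ℝ) / 2))
        (Set.Ioo 0 1) (Set.Ioi 0)) :=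
  I_alpha_properties_general α hα
end
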